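/- arXiv:2502.19203 — 6 statements merged into one kernel-verified Lean document; each statement's English description precedes it below -/
import Mathlib

section
/- Let N ≥ 1 and let b, β, c, γ, Γ : ℝ^N → ℝ be continuous maps that are locally Lipschitz continuous on ℝ^N and satisfy Assumptions A. Then for every initial value z₀ ∈ ℝ^N there exists a unique differentiable function z : [0,∞) → ℝ^N with z(0) = z₀ that solves the moment ODE system on all of [0,∞) (i.e., the unique maximal solution of the moment ODE system is global). -/
open MeasureTheory

/-- The norm `‖x‖_N := (∑_{i=1}^N |x_i|^{2/i})^{1/2}` (components indexed by `Fin N`,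
so `x i` is the `(i+1)`-th coordinate). -/
noncomputable def normN (N : ℕ) (x : Fin N → ℝ) : ℝ :=
  Real.sqrt (∑ i : Fin N, |x i| ^ ((2 : ℝ) / ((i : ℕ) + 1)))

/-- Extended components: `extComp N x j = x_j` for `1 ≤ j ≤ N`, with the conventions
`x_0 = 1` and `x_j = 0` for `j < 0`. -/
def extComp (N : ℕ) (x : Fin N → ℝ) (j : ℤ) : ℝ :=
  if h : 0 < j ∧ j ≤ (N : ℤ) then x ⟨(j - 1).toNat, by omega⟩
  else if j = 0 then 1 else 0

/-- Right-hand side of the moment ODE system for the `(k+1)`-th component (`k : Fin N`). -/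
noncomputable def momentRHS (N : ℕ) (b β c γ Γ : (Fin N → ℝ) → ℝ)
    (x : Fin N → ℝ) (k : Fin N) : ℝ :=
  (((k : ℕ) + 1 : ℝ) * β x + (((k : ℕ) + 1 : ℝ) * (k : ℕ) / 2) * Γ x) * x k
    + (((k : ℕ) + 1 : ℝ) * b x + (((k : ℕ) + 1 : ℝ) * (k : ℕ) / 2) * γ x)
        * extComp N x ((k : ℕ) : ℤ)
    + (((k : ℕ) + 1 : ℝ) * (k : ℕ) / 2) * c x * extComp N x (((k : ℕ) : ℤ) - 1)

/-- `z` solves the moment ODE system on the set `I`. -/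
def IsMomentSol (N : ℕ) (b β c γ Γ : (Fin N → ℝ) → ℝ) (I : Set ℝ)
    (z : ℝ → Fin N → ℝ) : Prop :=
  ∀ k : Fin N, ∀ t ∈ I,
    HasDerivWithinAt (fun s => z s k) (momentRHS N b β c γ Γ (z t) k) I t

/-!
The vector field is locally Lipschitz, so solutions are unique and exist locally, for a time that
is uniform over initial values in a compact set. Hence a solution on `[0, T]` exists as soon as all
solutions on subintervals of `[0, T]` stay in a fixed compact set, and these solutions patch
together to a global one.

The a priori bound has two steps. The equation for `z₁` involves only `β` and `b`, so
`|z₁'| ≤ (β₀ + b₀) |z₁| + b₀` and Grönwall bounds `|z₁|` by some `B` on `[0, T]`. Once `|z₁| ≤ B`,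
Assumptions A make the right-hand side weighted homogeneous: `|zᵢ| ≤ mⁱ` for all `i` implies
`|zₖ'| ≤ K mᵏ` with `K` depending only on `B`. Comparing each `zₖ` with `(P e^{K t})ᵏ`, where
`P` exceeds every `|zᵢ(0)|`, keeps `|zₖ(t)| < (P e^{K t})ᵏ` for all `k` simultaneously.
-/

open Set Topology Metric Real
open scoped NNReal

lemma LocallyLipschitz.mul' {X 𝔸 : Type*} [PseudoEMetricSpace X] [NormedRing 𝔸] [NormedAlgebra ℝ 𝔸]
    {f g : X → 𝔸} (hf : LocallyLipschitz f) (hg : LocallyLipschitz g) :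
    LocallyLipschitz fun x => f x * g x :=
  (contDiff_mul (𝕜 := ℝ)).locallyLipschitz.comp (hf.prodMk hg)

lemma LocallyLipschitz.pi {X ι : Type*} [PseudoEMetricSpace X] [Fintype ι] {f : X → ι → ℝ}
    (hf : ∀ i, LocallyLipschitz fun x => f x i) : LocallyLipschitz f := by
  intro x
  choose K t ht hK using fun i => hf i x
  refine ⟨Finset.univ.sup K, ⋂ i, t i, Filter.iInter_mem.2 ht, fun y hy z hz => ?_⟩
  refine edist_pi_le_iff.2 fun i => (hK i (mem_iInter.1 hy i) (mem_iInter.1 hz i)).trans ?_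
  gcongr
  exact Finset.le_sup (Finset.mem_univ i)

section AutonomousODE

variable {E : Type*} [NormedAddCommGroup E] [NormedSpace ℝ E] {F : E → E} {v : ℝ → E → E}

lemma IsIntegralCurveOn.hasDerivWithinAt_Ici {γ : ℝ → E} {a b t : ℝ}
    (hγ : IsIntegralCurveOn γ v (Icc a b)) (ht : t ∈ Ico a b) :
    HasDerivWithinAt γ (v t (γ t)) (Ici t) t :=
  (hγ t (Ico_subset_Icc_self ht)).mono_of_mem_nhdsWithin (Icc_mem_nhdsGE_of_mem ht)

lemma isIntegralCurveOn_singleton (γ : ℝ → E) (a : ℝ) : IsIntegralCurveOn γ v {a} := by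
  rintro t rfl
  rw [← hasDerivWithinAt_sdiff_singleton, sdiff_self]
  exact HasFDerivWithinAt.of_notMem_closure (by simp)

lemma IsIntegralCurveOn.piecewise_Icc {γ₁ γ₂ : ℝ → E} {a b c : ℝ}
    (h₁ : IsIntegralCurveOn γ₁ v (Icc a b)) (h₂ : IsIntegralCurveOn γ₂ v (Icc b c))
    (hb : γ₁ b = γ₂ b) :
    IsIntegralCurveOn (fun t => if t ≤ b then γ₁ t else γ₂ t) v (Icc a c) := by
  set γ : ℝ → E := fun t => if t ≤ b then γ₁ t else γ₂ t
  have e₁ : EqOn γ γ₁ (Icc a b) := fun t ht => if_pos ht.2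
  have e₂ : EqOn γ γ₂ (Icc b c) := fun t ht => by
    rcases ht.1.eq_or_lt with rfl | hlt
    · exact (if_pos le_rfl).trans hb
    · exact if_neg hlt.not_ge
  have piece : ∀ {γ' : ℝ → E} {s : Set ℝ}, IsClosed s → IsIntegralCurveOn γ' v s → EqOn γ γ' s →
      ∀ t, HasDerivWithinAt γ (v t (γ t)) s t := fun {γ' s} hs h e t => by
    by_cases ht : t ∈ s
    · rw [e ht]; exact (h t ht).congr e (e ht)
    · exact HasFDerivWithinAt.of_notMem_closure (by rwa [hs.closure_eq])
  intro t ht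
  exact ((piece isClosed_Icc h₁ e₁ t).union (piece isClosed_Icc h₂ e₂ t)).mono
    Icc_subset_Icc_union_Icc

theorem LocallyLipschitz.eqOn_Icc_of_isIntegralCurveOn (hF : LocallyLipschitz F)
    {γ₁ γ₂ : ℝ → E} {a b : ℝ} (h₁ : IsIntegralCurveOn γ₁ (fun _ => F) (Icc a b))
    (h₂ : IsIntegralCurveOn γ₂ (fun _ => F) (Icc a b)) (ha : γ₁ a = γ₂ a) :
    EqOn γ₁ γ₂ (Icc a b) := by
  set K := γ₁ '' Icc a b ∪ γ₂ '' Icc a b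
  have hK : IsCompact K := (isCompact_Icc.image_of_continuousOn h₁.continuousOn).union
    (isCompact_Icc.image_of_continuousOn h₂.continuousOn)
  obtain ⟨L, hL⟩ := hF.locallyLipschitzOn.exists_lipschitzOnWith_of_compact hK
  exact ODE_solution_unique_of_mem_Icc_right (s := fun _ => K) (fun _ _ => hL)
    h₁.continuousOn (fun t ht => h₁.hasDerivWithinAt_Ici ht)
    (fun _ ht => .inl (mem_image_of_mem _ (Ico_subset_Icc_self ht)))
    h₂.continuousOn (fun t ht => h₂.hasDerivWithinAt_Ici ht)
    (fun _ ht => .inr (mem_image_of_mem _ (Ico_subset_Icc_self ht))) ha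

theorem LocallyLipschitz.eqOn_Ici_of_isIntegralCurveOn (hF : LocallyLipschitz F)
    {γ₁ γ₂ : ℝ → E} {a : ℝ} (h₁ : IsIntegralCurveOn γ₁ (fun _ => F) (Ici a))
    (h₂ : IsIntegralCurveOn γ₂ (fun _ => F) (Ici a)) (ha : γ₁ a = γ₂ a) :
    EqOn γ₁ γ₂ (Ici a) := fun _ ht =>
  hF.eqOn_Icc_of_isIntegralCurveOn (h₁.mono Icc_subset_Ici_self) (h₂.mono Icc_subset_Ici_self)
    ha ⟨ht, le_rfl⟩

theorem LocallyLipschitz.exists_isIntegralCurveOn_Ici (hF : LocallyLipschitz F) {x₀ : E} {a : ℝ}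
    (hex : ∀ b, a ≤ b → ∃ γ : ℝ → E, γ a = x₀ ∧ IsIntegralCurveOn γ (fun _ => F) (Icc a b)) :
    ∃ γ : ℝ → E, γ a = x₀ ∧ IsIntegralCurveOn γ (fun _ => F) (Ici a) := by
  choose φ hφa hφ using fun n : ℕ => hex (a + n) (le_add_of_nonneg_right n.cast_nonneg)
  have lt_succ_floor : ∀ t, t < a + (⌊t - a⌋₊ + 1 : ℕ) := fun t => by
    have := Nat.lt_floor_add_one (t - a); push_cast; linarith
  set γ : ℝ → E := fun t => φ (⌊t - a⌋₊ + 1) t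
  have hγφ : ∀ n : ℕ, EqOn γ (φ n) (Icc a (a + n)) := fun n t ht =>
    hF.eqOn_Icc_of_isIntegralCurveOn
      ((hφ _).mono (Icc_subset_Icc_right (lt_succ_floor t).le))
      ((hφ n).mono (Icc_subset_Icc_right ht.2)) ((hφa _).trans (hφa n).symm) ⟨ht.1, le_rfl⟩
  refine ⟨γ, hφa _, fun t ht => ?_⟩
  set n := ⌊t - a⌋₊ + 1
  have htn : t ∈ Icc a (a + n) := ⟨ht, (lt_succ_floor t).le⟩
  have hnhds : Icc a (a + n) ∈ 𝓝[Ici a] t :=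
    Ici_inter_Iic (a := a) ▸ inter_mem_nhdsWithin _ (Iic_mem_nhds (lt_succ_floor t))
  rw [hγφ n htn]
  exact ((hφ n t htn).congr (hγφ n) (hγφ n htn)).mono_of_mem_nhdsWithin hnhds

variable [ProperSpace E]

lemma LocallyLipschitz.exists_pos_forall_exists_isIntegralCurveOn (hF : LocallyLipschitz F)
    {K : Set E} (hK : IsCompact K) :
    ∃ ε > 0, ∀ x ∈ K, ∀ t₀ : ℝ,
      ∃ γ : ℝ → E, γ t₀ = x ∧ IsIntegralCurveOn γ (fun _ => F) (Icc t₀ (t₀ + ε)) := by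
  have hK₁ : IsCompact (cthickening 1 K) := hK.cthickening
  obtain ⟨L, hL⟩ := hF.locallyLipschitzOn.exists_lipschitzOnWith_of_compact hK₁
  obtain ⟨C, hC⟩ := hK₁.exists_bound_of_continuousOn hF.continuous.continuousOn
  set C' : ℝ≥0 := C.toNNReal
  refine ⟨1 / (C' + 1), by positivity, fun x hx t₀ => ?_⟩
  have hball : closedBall x ((1 : ℝ≥0) : ℝ) ⊆ cthickening 1 K :=
    closedBall_subset_cthickening hx 1
  have hPL : IsPicardLindelof (fun _ => F) (tmin := t₀) (tmax := t₀ + 1 / (C' + 1))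
      ⟨t₀, le_rfl, le_add_of_nonneg_right (by positivity)⟩ x 1 0 C' L :=
    .of_time_independent (fun y hy => (hC y (hball hy)).trans (le_coe_toNNReal C))
      (hL.mono hball) (by
        simp only [add_sub_cancel_left, sub_self,
          max_eq_left (by positivity : (0 : ℝ) ≤ 1 / (C' + 1))]
        rw [NNReal.coe_one, NNReal.coe_zero, sub_zero, mul_one_div, div_le_one (by positivity)]
        linarith)
  exact hPL.exists_eq_forall_mem_Icc_hasDerivWithinAt₀

theorem LocallyLipschitz.exists_isIntegralCurveOn_Icc_of_mem (hF : LocallyLipschitz F)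
    {K : Set E} (hK : IsCompact K) {x₀ : E} {a b : ℝ} (hab : a ≤ b)
    (hbound : ∀ T ∈ Icc a b, ∀ γ : ℝ → E, γ a = x₀ →
      IsIntegralCurveOn γ (fun _ => F) (Icc a T) → γ T ∈ K) :
    ∃ γ : ℝ → E, γ a = x₀ ∧ IsIntegralCurveOn γ (fun _ => F) (Icc a b) := by
  obtain ⟨ε, hε, hstep⟩ := hF.exists_pos_forall_exists_isIntegralCurveOn hK
  suffices ∀ n : ℕ, ∀ T ∈ Icc a b, T ≤ a + n * ε →
      ∃ γ : ℝ → E, γ a = x₀ ∧ IsIntegralCurveOn γ (fun _ => F) (Icc a T) by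
    obtain ⟨n, hn⟩ := exists_nat_ge ((b - a) / ε)
    exact this n b ⟨hab, le_rfl⟩ (by rw [div_le_iff₀ hε] at hn; linarith)
  intro n
  induction n with
  | zero =>
    intro T hT hTa
    obtain rfl : T = a := le_antisymm (by simpa using hTa) hT.1
    exact ⟨fun _ => x₀, rfl, by simpa using isIntegralCurveOn_singleton _ T⟩
  | succ n ih =>
    intro T hT hTn
    by_cases hle : T ≤ a + n * ε
    · exact ih T hT hle
    set S := a + n * ε
    have hS : S ∈ Icc a b := ⟨le_add_of_nonneg_right (by positivity), by linarith [hT.2]⟩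
    obtain ⟨γ, hγa, hγ⟩ := ih S hS le_rfl
    obtain ⟨δ, hδS, hδ⟩ := hstep (γ S) (hbound S hS γ hγa hγ) S
    refine ⟨fun t => if t ≤ S then γ t else δ t, by simp [hS.1, hγa], ?_⟩
    exact (hγ.piecewise_Icc hδ hδS.symm).mono (Icc_subset_Icc_right (by push_cast at hTn; linarith))

end AutonomousODE

theorem abs_lt_of_forall_abs_deriv_le {ι : Type*} [Finite ι] {g g' u u' : ι → ℝ → ℝ} {a b : ℝ}
    (hg : ∀ i, ContinuousOn (g i) (Icc a b))
    (hg' : ∀ i, ∀ t ∈ Ico a b, HasDerivWithinAt (g i) (g' i t) (Ici t) t)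
    (hu : ∀ i t, HasDerivAt (u i) (u' i t) t) (ha : ∀ i, |g i a| < u i a)
    (bound : ∀ t ∈ Ico a b, (∀ i, |g i t| < u i t) → ∀ i, |g' i t| ≤ u' i t) :
    ∀ t ∈ Icc a b, ∀ i, |g i t| < u i t := by
  by_contra! ⟨t₁, ht₁, i₁, hi₁⟩
  set S := ⋃ i, Icc a b ∩ (fun t => |g i t| - u i t) ⁻¹' Ici 0
  have hS : IsClosed S := isClosed_iUnion_of_finite fun i =>
    ((hg i).abs.sub fun t _ => (hu i t).continuousAt.continuousWithinAt)
      |>.preimage_isClosed_of_isClosed isClosed_Icc isClosed_Ici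
  have hSa : BddBelow S := ⟨a, fun t ht => by
    obtain ⟨i, hi⟩ := mem_iUnion.1 ht
    exact hi.1.1⟩
  obtain ⟨i, hτ, hτi⟩ := mem_iUnion.1
    (hS.csInf_mem ⟨t₁, mem_iUnion.2 ⟨i₁, ht₁, sub_nonneg.2 hi₁⟩⟩ hSa)
  set τ := sInf S
  -- `τ` is the first time some bound fails; all of them hold on `[a, τ)`, and fencing
  -- against `u i` shifted down by its initial margin keeps the bound strict at `τ`
  have before : ∀ t ∈ Ico a τ, ∀ j, |g j t| < u j t := fun t ht j => by
    by_contra! h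
    exact notMem_of_lt_csInf ht.2 hSa
      (mem_iUnion.2 ⟨j, ⟨ht.1, ht.2.le.trans hτ.2⟩, sub_nonneg.2 h⟩)
  have fence := image_norm_le_of_norm_deriv_right_le_deriv_boundary (a := a) (b := τ)
    ((hg i).mono (Icc_subset_Icc_right hτ.2))
    (fun t ht => hg' i t ⟨ht.1, ht.2.trans_le hτ.2⟩)
    (B := fun t => u i t - (u i a - |g i a|)) (by simp) (fun t => (hu i t).sub_const _)
    (fun t ht => bound t ⟨ht.1, ht.2.trans_le hτ.2⟩ (before t ht) i) ⟨hτ.1, le_rfl⟩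
  simp only [Real.norm_eq_abs] at fence
  simp only [mem_preimage, mem_Ici, sub_nonneg] at hτi
  linarith [ha i]

theorem abs_lt_pow_of_isIntegralCurveOn {N : ℕ} {F : (Fin N → ℝ) → Fin N → ℝ}
    {w : ℝ → Fin N → ℝ} {T K P : ℝ} (hw : IsIntegralCurveOn w (fun _ => F) (Icc 0 T))
    (hK : 0 ≤ K) (hP : 1 ≤ P) (h0 : ∀ k, |w 0 k| < P)
    (hF : ∀ t ∈ Ico 0 T, ∀ m : ℝ, 1 ≤ m → (∀ i : Fin N, |w t i| ≤ m ^ ((i : ℕ) + 1)) →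
      ∀ k : Fin N, |F (w t) k| ≤ K * m ^ ((k : ℕ) + 1)) :
    ∀ t ∈ Icc 0 T, ∀ k : Fin N, |w t k| < (P * exp (K * t)) ^ ((k : ℕ) + 1) := by
  have one_le : ∀ t, 0 ≤ t → 1 ≤ P * exp (K * t) := fun t ht =>
    one_le_mul_of_one_le_of_one_le hP (one_le_exp (mul_nonneg hK ht))
  refine abs_lt_of_forall_abs_deriv_le (g' := fun k t => F (w t) k)
    (u' := fun k t => ((k : ℕ) + 1) * K * (P * exp (K * t)) ^ ((k : ℕ) + 1))
    (fun k => (continuous_apply k).comp_continuousOn hw.continuousOn)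
    (fun k t ht => hasDerivWithinAt_pi.1 (hw.hasDerivWithinAt_Ici ht) k)
    (fun k t => ?_) (fun k => ?_) (fun t ht hlt k => ?_)
  · refine ((((hasDerivAt_id t).const_mul K).exp.const_mul P).pow ((k : ℕ) + 1)).congr_deriv ?_
    simp only [id, mul_one, Nat.add_sub_cancel]
    push_cast
    ring
  · simpa using (h0 k).trans_le (le_self_pow₀ hP (by omega))
  · calc |F (w t) k| ≤ K * (P * exp (K * t)) ^ ((k : ℕ) + 1) :=
          hF t ht _ (one_le t ht.1) (fun i => (hlt i).le) k
      _ ≤ ((k : ℕ) + 1) * K * (P * exp (K * t)) ^ ((k : ℕ) + 1) := by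
          rw [mul_assoc]
          exact le_mul_of_one_le_left (by positivity) (by linarith [(k : ℕ).cast_nonneg (α := ℝ)])

lemma locallyLipschitz_extComp (N : ℕ) (j : ℤ) :
    LocallyLipschitz fun x : Fin N → ℝ => extComp N x j := by
  unfold extComp
  split_ifs
  · exact (LipschitzWith.eval _).locallyLipschitz
  all_goals exact .const _

lemma locallyLipschitz_momentRHS {N : ℕ} {b β c γ Γ : (Fin N → ℝ) → ℝ}
    (hb : LocallyLipschitz b) (hβ : LocallyLipschitz β) (hc : LocallyLipschitz c)
    (hγ : LocallyLipschitz γ) (hΓ : LocallyLipschitz Γ) :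
    LocallyLipschitz (momentRHS N b β c γ Γ) :=
  .pi fun k =>
    ((((LocallyLipschitz.const _).mul' hβ).add ((LocallyLipschitz.const _).mul' hΓ)).mul'
      (LipschitzWith.eval k).locallyLipschitz |>.add
    ((((LocallyLipschitz.const _).mul' hb).add ((LocallyLipschitz.const _).mul' hγ)).mul'
      (locallyLipschitz_extComp N _))).add
    (((LocallyLipschitz.const _).mul' hc).mul' (locallyLipschitz_extComp N _))

lemma isMomentSol_iff {N : ℕ} {b β c γ Γ : (Fin N → ℝ) → ℝ} {I : Set ℝ} {z : ℝ → Fin N → ℝ} :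
    IsMomentSol N b β c γ Γ I z ↔ IsIntegralCurveOn z (fun _ => momentRHS N b β c γ Γ) I :=
  ⟨fun h t ht => hasDerivWithinAt_pi.2 fun k => h k t ht,
    fun h k t ht => hasDerivWithinAt_pi.1 (h t ht) k⟩

lemma momentRHS_zero {N : ℕ} (hN : 0 < N) (b β c γ Γ : (Fin N → ℝ) → ℝ) (x : Fin N → ℝ) :
    momentRHS N b β c γ Γ x ⟨0, hN⟩ = β x * x ⟨0, hN⟩ + b x := by
  simp [momentRHS, extComp]

lemma abs_extComp_le_zpow {N : ℕ} {x : Fin N → ℝ} {m : ℝ} (hm : 1 ≤ m)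
    (hx : ∀ i : Fin N, |x i| ≤ m ^ ((i : ℕ) + 1)) (j : ℤ) : |extComp N x j| ≤ m ^ j := by
  unfold extComp
  split_ifs with h h0
  · convert hx ⟨(j - 1).toNat, by omega⟩ using 1
    rw [← zpow_natCast]
    congr 1
    push_cast
    omega
  · simp [h0]
  · simpa using zpow_nonneg (zero_le_one.trans hm) j

lemma normN_le {N : ℕ} {x : Fin N → ℝ} {m : ℝ} (hm : 0 ≤ m)
    (hx : ∀ i : Fin N, |x i| ≤ m ^ ((i : ℕ) + 1)) : normN N x ≤ √N * m := by
  have hterm : ∀ i : Fin N, |x i| ^ ((2 : ℝ) / ((i : ℕ) + 1)) ≤ m ^ 2 := fun i => by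
    calc |x i| ^ ((2 : ℝ) / ((i : ℕ) + 1))
        ≤ (m ^ ((i : ℕ) + 1)) ^ ((2 : ℝ) / ((i : ℕ) + 1)) := by gcongr; exact hx i
      _ = m ^ 2 := by
        rw [← rpow_natCast, ← rpow_mul hm, ← rpow_two]
        congr 1
        push_cast
        field_simp
  calc normN N x ≤ √(N * m ^ 2) := by
        unfold normN
        gcongr
        exact (Finset.sum_le_sum fun i _ => hterm i).trans_eq (by simp)
    _ = √N * m := by rw [sqrt_mul N.cast_nonneg, sqrt_sq hm]

lemma abs_momentRHS_le {N : ℕ} {b β c γ Γ : (Fin N → ℝ) → ℝ} {x : Fin N → ℝ}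
    {m b₁ β₁ c₁ γ₁ Γ₁ : ℝ} (hm : 1 ≤ m) (hx : ∀ i : Fin N, |x i| ≤ m ^ ((i : ℕ) + 1))
    (hβ : |β x| ≤ β₁) (hΓ : |Γ x| ≤ Γ₁) (hb : |b x| ≤ b₁ * m) (hγ : |γ x| ≤ γ₁ * m)
    (hc : |c x| ≤ c₁ * m ^ 2) (k : Fin N) :
    |momentRHS N b β c γ Γ x k| ≤ N ^ 2 * (β₁ + Γ₁ + b₁ + γ₁ + c₁) * m ^ ((k : ℕ) + 1) := by
  set n : ℕ := (k : ℕ)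
  set p : ℝ := n + 1
  set q : ℝ := p * n / 2
  have hp : 0 ≤ p := by positivity
  have hq : 0 ≤ q := by positivity
  have hm₀ : 0 < m := zero_lt_one.trans_le hm
  have hβ₁ : 0 ≤ β₁ := (abs_nonneg _).trans hβ
  have hΓ₁ : 0 ≤ Γ₁ := (abs_nonneg _).trans hΓ
  have hb₁ : 0 ≤ b₁ := nonneg_of_mul_nonneg_left ((abs_nonneg _).trans hb) hm₀
  have hγ₁ : 0 ≤ γ₁ := nonneg_of_mul_nonneg_left ((abs_nonneg _).trans hγ) hm₀
  have hc₁ : 0 ≤ c₁ := nonneg_of_mul_nonneg_left ((abs_nonneg _).trans hc) (by positivity)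
  -- the weights make every term homogeneous of degree `n + 1` in `m`
  have e₁ : m * |extComp N x n| ≤ m ^ (n + 1) := by
    calc m * |extComp N x n| ≤ m * m ^ (n : ℤ) :=
          mul_le_mul_of_nonneg_left (abs_extComp_le_zpow hm hx n) hm₀.le
      _ = m ^ (n + 1) := by rw [zpow_natCast, pow_succ']
  have e₂ : m ^ 2 * |extComp N x (n - 1)| ≤ m ^ (n + 1) := by
    calc m ^ 2 * |extComp N x (n - 1)| ≤ m ^ 2 * m ^ ((n : ℤ) - 1) :=
          mul_le_mul_of_nonneg_left (abs_extComp_le_zpow hm hx _) (by positivity)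
      _ = m ^ (n + 1) := by
          rw [← zpow_natCast, ← zpow_natCast, ← zpow_add₀ hm₀.ne']
          congr 1
          push_cast
          ring
  have hpN : p ≤ N := by simp only [p]; exact_mod_cast k.2
  have hp₁ : 1 ≤ p := by simp [p]
  have tri : ∀ u v : ℝ, |p * u + q * v| ≤ p * |u| + q * |v| := fun u v =>
    (abs_add_le _ _).trans (by rw [abs_mul, abs_mul, abs_of_nonneg hp, abs_of_nonneg hq])
  calc |momentRHS N b β c γ Γ x k|
      = |(p * β x + q * Γ x) * x k + (p * b x + q * γ x) * extComp N x n
          + q * c x * extComp N x (n - 1)| := rfl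
    _ ≤ (p * |β x| + q * |Γ x|) * |x k| + (p * |b x| + q * |γ x|) * |extComp N x n|
          + q * |c x| * |extComp N x (n - 1)| := by
        refine (abs_add_three _ _ _).trans ?_
        rw [abs_mul, abs_mul, abs_mul, abs_mul, abs_of_nonneg hq]
        gcongr <;> apply tri
    _ ≤ (p * β₁ + q * Γ₁) * m ^ (n + 1) + (p * (b₁ * m) + q * (γ₁ * m)) * |extComp N x n|
          + q * (c₁ * m ^ 2) * |extComp N x (n - 1)| := by
        gcongr
        exact hx k
    _ = (p * β₁ + q * Γ₁) * m ^ (n + 1) + (p * b₁ + q * γ₁) * (m * |extComp N x n|)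
          + q * c₁ * (m ^ 2 * |extComp N x (n - 1)|) := by ring
    _ ≤ (p * β₁ + q * Γ₁) * m ^ (n + 1) + (p * b₁ + q * γ₁) * m ^ (n + 1)
          + q * c₁ * m ^ (n + 1) := by gcongr
    _ = (p * (β₁ + b₁) + q * (Γ₁ + γ₁ + c₁)) * m ^ (n + 1) := by ring
    _ ≤ N ^ 2 * (β₁ + Γ₁ + b₁ + γ₁ + c₁) * m ^ (n + 1) := by
        have hpN₂ : p ≤ N ^ 2 := by nlinarith
        have hqN₂ : q ≤ N ^ 2 := by
          have : (n : ℝ) ≤ N := by linarith [show (n : ℝ) + 1 = p from rfl]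
          simp only [q]
          nlinarith
        gcongr
        linarith [mul_le_mul_of_nonneg_right hpN₂ (add_nonneg hβ₁ hb₁),
          mul_le_mul_of_nonneg_right hqN₂ (add_nonneg (add_nonneg hΓ₁ hγ₁) hc₁)]

section AssumptionsA

variable {N : ℕ} (hN : 0 < N) {b β c γ Γ : (Fin N → ℝ) → ℝ} {b₀ β₀ c₀ γ₀ Γ₀ : ℝ}
  {f_c f_γ : ℝ → ℝ}

lemma abs_momentRHS_le_of_assumptionsA (hb₀ : 0 ≤ b₀) (hc₀ : 0 ≤ c₀) (hγ₀ : 0 ≤ γ₀)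
    (hfc_mono : MonotoneOn f_c (Ici 0)) (hfc_nonneg : ∀ s ∈ Ici (0 : ℝ), 0 ≤ f_c s)
    (hfγ_mono : MonotoneOn f_γ (Ici 0)) (hfγ_nonneg : ∀ s ∈ Ici (0 : ℝ), 0 ≤ f_γ s)
    (hβb : ∀ x, |β x| ≤ β₀) (hΓb : ∀ x, |Γ x| ≤ Γ₀)
    (hbb : ∀ x : Fin N → ℝ, |b x| ≤ b₀ * (1 + |x ⟨0, hN⟩|))
    (hγb : ∀ x : Fin N → ℝ, |γ x| ≤ γ₀ * (1 + f_γ |x ⟨0, hN⟩| + normN N x))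
    (hcb : ∀ x : Fin N → ℝ, |c x| ≤ c₀ * (1 + f_c |x ⟨0, hN⟩| + (normN N x) ^ 2))
    {x : Fin N → ℝ} {B m : ℝ} (hx₀ : |x ⟨0, hN⟩| ≤ B) (hm : 1 ≤ m)
    (hx : ∀ i : Fin N, |x i| ≤ m ^ ((i : ℕ) + 1)) (k : Fin N) :
    |momentRHS N b β c γ Γ x k| ≤ N ^ 2 * (β₀ + Γ₀ + b₀ * (1 + B)
      + γ₀ * (1 + f_γ B + √N) + c₀ * (1 + f_c B + N)) * m ^ ((k : ℕ) + 1) := by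
  have hB₀ : 0 ≤ B := (abs_nonneg _).trans hx₀
  have hB : B ∈ Ici (0 : ℝ) := mem_Ici.2 hB₀
  have hx₀' : |x ⟨0, hN⟩| ∈ Ici (0 : ℝ) := mem_Ici.2 (abs_nonneg _)
  have hnorm : normN N x ≤ √N * m := normN_le (zero_le_one.trans hm) hx
  have hnorm_sq : normN N x ^ 2 ≤ N * m ^ 2 := by
    calc normN N x ^ 2 ≤ (√N * m) ^ 2 := by gcongr; exact sqrt_nonneg _
      _ = N * m ^ 2 := by rw [mul_pow, sq_sqrt N.cast_nonneg]
  have hfγ := hfγ_mono hx₀' hB hx₀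
  have hfc := hfc_mono hx₀' hB hx₀
  have hGB := hfγ_nonneg B hB
  have hHB := hfc_nonneg B hB
  refine abs_momentRHS_le hm hx (hβb x) (hΓb x) ((hbb x).trans ?_) ((hγb x).trans ?_)
    ((hcb x).trans ?_) k
  · rw [mul_assoc]
    gcongr
    nlinarith
  · rw [mul_assoc]
    gcongr
    nlinarith [sqrt_nonneg (N : ℝ)]
  · rw [mul_assoc]
    gcongr
    nlinarith [one_le_pow₀ (n := 2) hm]

lemma abs_momentSol_zero_le_gronwallBound (hβb : ∀ x, |β x| ≤ β₀)
    (hbb : ∀ x : Fin N → ℝ, |b x| ≤ b₀ * (1 + |x ⟨0, hN⟩|)) {w : ℝ → Fin N → ℝ} {T : ℝ}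
    (hw : IsIntegralCurveOn w (fun _ => momentRHS N b β c γ Γ) (Icc 0 T)) :
    ∀ t ∈ Icc 0 T, |w t ⟨0, hN⟩| ≤ gronwallBound |w 0 ⟨0, hN⟩| (β₀ + b₀) b₀ t := by
  intro t ht
  simpa using norm_le_gronwallBound_of_norm_deriv_right_le
    ((continuous_apply _).comp_continuousOn hw.continuousOn)
    (fun t ht => hasDerivWithinAt_pi.1 (hw.hasDerivWithinAt_Ici ht) ⟨0, hN⟩) le_rfl
    (fun t _ => by
      simp only [Real.norm_eq_abs, momentRHS_zero]
      calc |β (w t) * w t ⟨0, hN⟩ + b (w t)| ≤ |β (w t)| * |w t ⟨0, hN⟩| + |b (w t)| := by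
            rw [← abs_mul]; exact abs_add_le _ _
        _ ≤ β₀ * |w t ⟨0, hN⟩| + b₀ * (1 + |w t ⟨0, hN⟩|) := by
            gcongr
            exacts [hβb _, hbb _]
        _ = (β₀ + b₀) * |w t ⟨0, hN⟩| + b₀ := by ring) t ht

theorem exists_forall_norm_le_of_isIntegralCurveOn_momentRHS (hb₀ : 0 ≤ b₀) (hβ₀ : 0 ≤ β₀)
    (hc₀ : 0 ≤ c₀) (hγ₀ : 0 ≤ γ₀) (hΓ₀ : 0 ≤ Γ₀)
    (hfc_mono : MonotoneOn f_c (Ici 0)) (hfc_nonneg : ∀ s ∈ Ici (0 : ℝ), 0 ≤ f_c s)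
    (hfγ_mono : MonotoneOn f_γ (Ici 0)) (hfγ_nonneg : ∀ s ∈ Ici (0 : ℝ), 0 ≤ f_γ s)
    (hβb : ∀ x, |β x| ≤ β₀) (hΓb : ∀ x, |Γ x| ≤ Γ₀)
    (hbb : ∀ x : Fin N → ℝ, |b x| ≤ b₀ * (1 + |x ⟨0, hN⟩|))
    (hγb : ∀ x : Fin N → ℝ, |γ x| ≤ γ₀ * (1 + f_γ |x ⟨0, hN⟩| + normN N x))
    (hcb : ∀ x : Fin N → ℝ, |c x| ≤ c₀ * (1 + f_c |x ⟨0, hN⟩| + (normN N x) ^ 2))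
    (ζ : Fin N → ℝ) {T₀ : ℝ} (hT₀ : 0 ≤ T₀) :
    ∃ ρ, ∀ T ∈ Icc 0 T₀, ∀ w : ℝ → Fin N → ℝ, w 0 = ζ →
      IsIntegralCurveOn w (fun _ => momentRHS N b β c γ Γ) (Icc 0 T) → ‖w T‖ ≤ ρ := by
  set B := gronwallBound |ζ ⟨0, hN⟩| (β₀ + b₀) b₀ T₀
  set K := N ^ 2 * (β₀ + Γ₀ + b₀ * (1 + B) + γ₀ * (1 + f_γ B + √N) + c₀ * (1 + f_c B + N))
  set P := 1 + ∑ j, |ζ j|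
  have hmono := gronwallBound_mono (abs_nonneg (ζ ⟨0, hN⟩)) hb₀ (add_nonneg hβ₀ hb₀)
  have hB₀ : 0 ≤ B := (abs_nonneg _).trans (by simpa [gronwallBound_x0] using hmono hT₀)
  have hB : B ∈ Ici 0 := mem_Ici.2 hB₀
  have hK : 0 ≤ K := by
    have := hfγ_nonneg B hB
    have := hfc_nonneg B hB
    positivity
  have hP : 1 ≤ P := le_add_of_nonneg_right (Finset.sum_nonneg fun _ _ => abs_nonneg _)
  have hζP : ∀ k, |ζ k| < P := fun k => by
    have := Finset.single_le_sum (fun j _ => abs_nonneg (ζ j)) (Finset.mem_univ k)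
    simp only [P]
    linarith
  have hPexp : 1 ≤ P * exp (K * T₀) :=
    one_le_mul_of_one_le_of_one_le hP (one_le_exp (mul_nonneg hK hT₀))
  refine ⟨(P * exp (K * T₀)) ^ N, fun T hT w hw0 hw =>
    (pi_norm_le_iff_of_nonneg (by positivity)).2 fun k => ?_⟩
  have hw₀ : ∀ t ∈ Icc 0 T, |w t ⟨0, hN⟩| ≤ B := fun t ht =>
    (abs_momentSol_zero_le_gronwallBound hN hβb hbb hw t ht).trans
      (hw0 ▸ hmono (ht.2.trans hT.2))
  have hlt := abs_lt_pow_of_isIntegralCurveOn hw hK hP (hw0 ▸ hζP)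
    (fun t ht _ hm hx => abs_momentRHS_le_of_assumptionsA hN hb₀ hc₀ hγ₀ hfc_mono hfc_nonneg
      hfγ_mono hfγ_nonneg hβb hΓb hbb hγb hcb (hw₀ t (Ico_subset_Icc_self ht)) hm hx)
    T ⟨hT.1, le_rfl⟩ k
  calc ‖w T k‖ = |w T k| := Real.norm_eq_abs _
    _ ≤ (P * exp (K * T)) ^ ((k : ℕ) + 1) := hlt.le
    _ ≤ (P * exp (K * T₀)) ^ ((k : ℕ) + 1) := by gcongr; exact hT.2
    _ ≤ (P * exp (K * T₀)) ^ N := pow_le_pow_right₀ hPexp k.2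

end AssumptionsA

theorem stmt_0_general (N : ℕ) (hN : 0 < N)
    (b β c γ Γ : (Fin N → ℝ) → ℝ)
    (hbl : LocallyLipschitz b) (hβl : LocallyLipschitz β) (hcl : LocallyLipschitz c)
    (hγl : LocallyLipschitz γ) (hΓl : LocallyLipschitz Γ)
    -- Assumptions A:
    (b₀ β₀ c₀ γ₀ Γ₀ : ℝ) (hb₀ : 0 ≤ b₀) (hβ₀ : 0 ≤ β₀) (hc₀ : 0 ≤ c₀)
    (hγ₀ : 0 ≤ γ₀) (hΓ₀ : 0 ≤ Γ₀)
    (f_c f_γ : ℝ → ℝ)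
    (hfc_mono : MonotoneOn f_c (Set.Ici 0))
    (hfc_nonneg : ∀ s ∈ Set.Ici (0 : ℝ), 0 ≤ f_c s)
    (hfγ_mono : MonotoneOn f_γ (Set.Ici 0))
    (hfγ_nonneg : ∀ s ∈ Set.Ici (0 : ℝ), 0 ≤ f_γ s)
    (hβb : ∀ x, |β x| ≤ β₀) (hΓb : ∀ x, |Γ x| ≤ Γ₀)
    (hbb : ∀ x : Fin N → ℝ, |b x| ≤ b₀ * (1 + |x ⟨0, hN⟩|))
    (hγb : ∀ x : Fin N → ℝ, |γ x| ≤ γ₀ * (1 + f_γ |x ⟨0, hN⟩| + normN N x))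
    (hcb : ∀ x : Fin N → ℝ, |c x| ≤ c₀ * (1 + f_c |x ⟨0, hN⟩| + (normN N x) ^ 2))
    (z₀ : Fin N → ℝ) :
    ∃ z : ℝ → Fin N → ℝ,
      (z 0 = z₀ ∧ IsMomentSol N b β c γ Γ (Set.Ici 0) z) ∧
      ∀ w : ℝ → Fin N → ℝ, w 0 = z₀ → IsMomentSol N b β c γ Γ (Set.Ici 0) w →
        ∀ t ∈ Set.Ici (0 : ℝ), w t = z t := by
  have hF := locallyLipschitz_momentRHS hbl hβl hcl hγl hΓl
  have hex (T : ℝ) (hT : 0 ≤ T) : ∃ z : ℝ → Fin N → ℝ,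
      z 0 = z₀ ∧ IsIntegralCurveOn z (fun _ => momentRHS N b β c γ Γ) (Icc 0 T) := by
    obtain ⟨ρ, hρ⟩ := exists_forall_norm_le_of_isIntegralCurveOn_momentRHS hN hb₀ hβ₀ hc₀ hγ₀
      hΓ₀ hfc_mono hfc_nonneg hfγ_mono hfγ_nonneg hβb hΓb hbb hγb hcb z₀ hT
    exact hF.exists_isIntegralCurveOn_Icc_of_mem (isCompact_closedBall 0 ρ) hT
      fun T' hT' w hw0 hw => mem_closedBall_zero_iff.2 (hρ T' hT' w hw0 hw)
  obtain ⟨z, hz0, hz⟩ := hF.exists_isIntegralCurveOn_Ici hex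
  exact ⟨z, ⟨hz0, isMomentSol_iff.2 hz⟩, fun w hw0 hw =>
    hF.eqOn_Ici_of_isIntegralCurveOn (isMomentSol_iff.1 hw) hz (hw0.trans hz0.symm)⟩

/-- Under Assumptions A (with local Lipschitz continuity and continuity of the
coefficient maps) the moment ODE system has a unique global solution on `[0,∞)` for every
initial value. -/
theorem stmt_0 (N : ℕ) (hN : 0 < N)
    (b β c γ Γ : (Fin N → ℝ) → ℝ)
    (hbc : Continuous b) (hβc : Continuous β) (hcc : Continuous c)
    (hγc : Continuous γ) (hΓc : Continuous Γ)
    (hbl : LocallyLipschitz b) (hβl : LocallyLipschitz β) (hcl : LocallyLipschitz c)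
    (hγl : LocallyLipschitz γ) (hΓl : LocallyLipschitz Γ)
    -- Assumptions A:
    (b₀ β₀ c₀ γ₀ Γ₀ : ℝ) (hb₀ : 0 ≤ b₀) (hβ₀ : 0 ≤ β₀) (hc₀ : 0 ≤ c₀)
    (hγ₀ : 0 ≤ γ₀) (hΓ₀ : 0 ≤ Γ₀)
    (f_c f_γ : ℝ → ℝ)
    (hfc_cont : ContinuousOn f_c (Set.Ici 0)) (hfc_mono : MonotoneOn f_c (Set.Ici 0))
    (hfc_nonneg : ∀ s ∈ Set.Ici (0 : ℝ), 0 ≤ f_c s)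
    (hfγ_cont : ContinuousOn f_γ (Set.Ici 0)) (hfγ_mono : MonotoneOn f_γ (Set.Ici 0))
    (hfγ_nonneg : ∀ s ∈ Set.Ici (0 : ℝ), 0 ≤ f_γ s)
    (hβb : ∀ x, |β x| ≤ β₀) (hΓb : ∀ x, |Γ x| ≤ Γ₀)
    (hbb : ∀ x : Fin N → ℝ, |b x| ≤ b₀ * (1 + |x ⟨0, hN⟩|))
    (hγb : ∀ x : Fin N → ℝ, |γ x| ≤ γ₀ * (1 + f_γ |x ⟨0, hN⟩| + normN N x))
    (hcb : ∀ x : Fin N → ℝ, |c x| ≤ c₀ * (1 + f_c |x ⟨0, hN⟩| + (normN N x) ^ 2))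
    (z₀ : Fin N → ℝ) :
    ∃ z : ℝ → Fin N → ℝ,
      (z 0 = z₀ ∧ IsMomentSol N b β c γ Γ (Set.Ici 0) z) ∧
      ∀ w : ℝ → Fin N → ℝ, w 0 = z₀ → IsMomentSol N b β c γ Γ (Set.Ici 0) w →
        ∀ t ∈ Set.Ici (0 : ℝ), w t = z t :=
  stmt_0_general N hN b β c γ Γ hbl hβl hcl hγl hΓl b₀ β₀ c₀ γ₀ Γ₀ hb₀ hβ₀ hc₀ hγ₀ hΓ₀ f_c f_γ
    hfc_mono hfc_nonneg hfγ_mono hfγ_nonneg hβb hΓb hbb hγb hcb z₀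
end

section
/- (Positive maximum principle on ℝ_{≥0}.) Let B, Σ : [0,∞) × ℝ → ℝ be continuous with Σ(t,0) = 0 and B(t,0) ≥ 0 for all t ≥ 0, let τ : [0,∞) → ℝ be continuously differentiable with compact support, and let f : ℝ → ℝ be twice continuously differentiable with compact support. Suppose (t₀, x₀) ∈ [0,∞) × [0,∞) satisfies τ(t₀)·f(x₀) = sup_{(t,x) ∈ [0,∞)×[0,∞)} τ(t)·f(x). Then τ(t₀)·( B(t₀,x₀)·f'(x₀) + (1/2)·Σ(t₀,x₀)²·f''(x₀) ) + τ'(t₀)·f(x₀) ≤ 0, where τ'(0) denotes the right-hand derivative of τ at 0 and f'(0), f''(0) denote right-hand derivatives at 0 (equivalently, two-sided derivatives of f on ℝ). -/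
/-!
At an interior maximum the first derivative vanishes and the second is nonpositive; at the boundary
point `0` of `[0, ∞)` only the one-sided inequality `f' ≤ 0` survives, and the boundary conditions
`Σ(t, 0) = 0`, `B(t, 0) ≥ 0` are exactly what keeps the generator nonpositive there. In time, a
maximum over `[0, ∞)` only gives a nonpositive one-sided derivative, which suffices.
-/

open Set Filter

noncomputable def diffusionGenerator (b s : ℝ) (g : ℝ → ℝ) (x : ℝ) : ℝ :=
  b * deriv g x + 1 / 2 * s ^ 2 * deriv (deriv g) x

theorem IsLocalMaxOn.hasDerivWithinAt_Ici_nonpos {g : ℝ → ℝ} {g' a x : ℝ}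
    (h : IsLocalMaxOn g (Ici a) x) (hx : a ≤ x) (hg : HasDerivWithinAt g g' (Ici a) x) :
    g' ≤ 0 := by
  have hcone : (1 : ℝ) ∈ posTangentConeAt (Ici a) x := by
    refine mem_posTangentConeAt_of_segment_subset fun y hy => ?_
    rw [segment_eq_Icc (by linarith)] at hy
    exact hx.trans hy.1
  simpa using h.hasFDerivWithinAt_nonpos hg.hasFDerivWithinAt hcone

/-- Otherwise the second-derivative test makes `x` a local minimum too, so `g` is locally constant
near `x`. -/
theorem IsLocalMax.deriv_deriv_nonpos {g : ℝ → ℝ} {x : ℝ} (h : IsLocalMax g x)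
    (hc : ContinuousAt g x) : deriv (deriv g) x ≤ 0 := by
  by_contra! hpos
  have hconst : g =ᶠ[nhds x] fun _ => g x :=
    (h.and (isLocalMin_of_deriv_deriv_pos hpos h.deriv_eq_zero hc)).mono
      fun y hy => le_antisymm hy.1 hy.2
  have hderiv : deriv g =ᶠ[nhds x] fun _ => 0 := by
    simpa using hconst.deriv
  simp [hderiv.deriv_eq] at hpos

theorem IsMaxOn.diffusionGenerator_nonpos {g : ℝ → ℝ} {b s x : ℝ} (h : IsMaxOn g (Ici 0) x)
    (hx : 0 ≤ x) (hg : DifferentiableAt ℝ g x) (hb : x = 0 → 0 ≤ b) (hs : x = 0 → s = 0) :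
    diffusionGenerator b s g x ≤ 0 := by
  rcases hx.eq_or_lt with rfl | hx
  · have hg' : deriv g 0 ≤ 0 :=
      h.localize.hasDerivWithinAt_Ici_nonpos le_rfl hg.hasDerivAt.hasDerivWithinAt
    simp only [diffusionGenerator, hs rfl]
    nlinarith [hb rfl]
  · have hloc : IsLocalMax g x := h.isLocalMax (Ici_mem_nhds hx)
    have hg'' : deriv (deriv g) x ≤ 0 := hloc.deriv_deriv_nonpos hg.continuousAt
    simp only [diffusionGenerator, hloc.deriv_eq_zero]
    nlinarith [sq_nonneg s]

theorem stmt_4_general (B Sg : ℝ → ℝ → ℝ)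
    (hSg0 : ∀ t ∈ Set.Ici (0 : ℝ), Sg t 0 = 0)
    (hB0 : ∀ t ∈ Set.Ici (0 : ℝ), 0 ≤ B t 0)
    (τ τ' : ℝ → ℝ)
    (hτderiv : ∀ t ∈ Set.Ici (0 : ℝ), HasDerivWithinAt τ (τ' t) (Set.Ici 0) t)
    (f : ℝ → ℝ) (hf : ContDiff ℝ 2 f)
    (t₀ x₀ : ℝ) (ht₀ : t₀ ∈ Set.Ici (0 : ℝ)) (hx₀ : x₀ ∈ Set.Ici (0 : ℝ))
    (hmax : ∀ t ∈ Set.Ici (0 : ℝ), ∀ x ∈ Set.Ici (0 : ℝ), τ t * f x ≤ τ t₀ * f x₀) :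
    τ t₀ * (B t₀ x₀ * deriv f x₀ + (1 / 2) * (Sg t₀ x₀) ^ 2 * deriv (deriv f) x₀)
      + τ' t₀ * f x₀ ≤ 0 := by
  have htime : τ' t₀ * f x₀ ≤ 0 := by
    have hmax_t : IsMaxOn (fun t => τ t * f x₀) (Ici 0) t₀ := fun t ht => hmax t ht x₀ hx₀
    exact hmax_t.localize.hasDerivWithinAt_Ici_nonpos ht₀ ((hτderiv t₀ ht₀).mul_const _)
  have hspace : diffusionGenerator (B t₀ x₀) (Sg t₀ x₀) (fun x => τ t₀ * f x) x₀ ≤ 0 := by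
    have hmax_x : IsMaxOn (fun x => τ t₀ * f x) (Ici 0) x₀ := fun x hx => hmax t₀ ht₀ x hx
    refine hmax_x.diffusionGenerator_nonpos hx₀
      ((hf.differentiable (by norm_num) x₀).const_mul _) ?_ ?_
    · rintro rfl; exact hB0 t₀ ht₀
    · rintro rfl; exact hSg0 t₀ ht₀
  simp only [diffusionGenerator, deriv_const_mul_field'] at hspace
  linarith

/-- Positive maximum principle on the state space `ℝ_{≥0}`: under the boundary
conditions `Σ(t,0) = 0` and `B(t,0) ≥ 0`, if `τ·f` attains its supremum over `[0,∞) × [0,∞)` at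
`(t₀, x₀)`, then the time-extended generator applied to `τ·f` at `(t₀,x₀)` is nonpositive.
Here `τ'` is the (right-hand at `0`) derivative of `τ` on `[0,∞)`, and `f'`, `f''` are the
(two-sided) derivatives of the `C²` function `f` on `ℝ`. -/
theorem stmt_4 (B Sg : ℝ → ℝ → ℝ)
    (hB : ContinuousOn (fun p : ℝ × ℝ => B p.1 p.2) (Set.Ici 0 ×ˢ Set.univ))
    (hSg : ContinuousOn (fun p : ℝ × ℝ => Sg p.1 p.2) (Set.Ici 0 ×ˢ Set.univ))
    (hSg0 : ∀ t ∈ Set.Ici (0 : ℝ), Sg t 0 = 0)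
    (hB0 : ∀ t ∈ Set.Ici (0 : ℝ), 0 ≤ B t 0)
    (τ τ' : ℝ → ℝ)
    (hτderiv : ∀ t ∈ Set.Ici (0 : ℝ), HasDerivWithinAt τ (τ' t) (Set.Ici 0) t)
    (hτ'cont : ContinuousOn τ' (Set.Ici 0))
    (hτsupp : ∃ K : Set ℝ, IsCompact K ∧ ∀ t ∈ Set.Ici (0 : ℝ), t ∉ K → τ t = 0)
    (f : ℝ → ℝ) (hf : ContDiff ℝ 2 f) (hfsupp : HasCompactSupport f)
    (t₀ x₀ : ℝ) (ht₀ : t₀ ∈ Set.Ici (0 : ℝ)) (hx₀ : x₀ ∈ Set.Ici (0 : ℝ))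
    (hmax : ∀ t ∈ Set.Ici (0 : ℝ), ∀ x ∈ Set.Ici (0 : ℝ), τ t * f x ≤ τ t₀ * f x₀) :
    τ t₀ * (B t₀ x₀ * deriv f x₀ + (1 / 2) * (Sg t₀ x₀) ^ 2 * deriv (deriv f) x₀)
      + τ' t₀ * f x₀ ≤ 0 :=
  stmt_4_general B Sg hSg0 hB0 τ τ' hτderiv f hf t₀ x₀ ht₀ hx₀ hmax
end

section
/- Let N ≥ 1 and let b, β, c, γ, Γ : ℝ^N → ℝ satisfy Assumptions B with constants b₀, β₀, c₀, γ₀, Γ₀ ≥ 0. Then for every z₀ ∈ ℝ^N there exists a continuous nondecreasing function g : [0,∞) → [0,∞), depending only on N, z₀ and the constants b₀, β₀, c₀, γ₀, Γ₀, such that every differentiable solution z : [0,T) → ℝ^N of the moment ODE system with z(0) = z₀ satisfies ‖z(t)‖_N^{2N} ≤ g(t) for all t ∈ [0,T). -/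
open MeasureTheory

/-!
With `‖·‖_N` the coordinate `x_i` has weight `i`, and under Assumptions B the `i`-th component of
the vector field has weighted degree at most `i`. The polynomial
`V(x) = 1 + N^(N!-1) ∑ᵢ x_i^(2N!/i)`, whose monomials all have weighted degree `2N!`, therefore
satisfies `|dV(z(t))/dt| ≤ K V(z(t))`, and Grönwall's inequality gives `V(z(t)) ≤ V(z₀) e^{Kt}`.
By the power-mean inequality, `‖x‖_N^{2N} ≤ 1 + ‖x‖_N^{2N!} ≤ V(x)`.
-/

open Finset Real Set

structure AssumptionsB (N : ℕ) (b β c γ Γ : (Fin N → ℝ) → ℝ) (b₀ β₀ c₀ γ₀ Γ₀ : ℝ) : Prop where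
  b₀_nonneg : 0 ≤ b₀
  β₀_nonneg : 0 ≤ β₀
  c₀_nonneg : 0 ≤ c₀
  γ₀_nonneg : 0 ≤ γ₀
  Γ₀_nonneg : 0 ≤ Γ₀
  abs_β_le : ∀ x, |β x| ≤ β₀
  abs_Γ_le : ∀ x, |Γ x| ≤ Γ₀
  abs_b_le : ∀ x, |b x| ≤ b₀ * (1 + normN N x)
  abs_γ_le : ∀ x, |γ x| ≤ γ₀ * (1 + normN N x)
  abs_c_le : ∀ x, |c x| ≤ c₀ * (1 + normN N x ^ 2)

lemma AssumptionsB.sum_constants_nonneg {N : ℕ} {b β c γ Γ : (Fin N → ℝ) → ℝ}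
    {b₀ β₀ c₀ γ₀ Γ₀ : ℝ} (hB : AssumptionsB N b β c γ Γ b₀ β₀ c₀ γ₀ Γ₀) :
    0 ≤ β₀ + Γ₀ + b₀ + γ₀ + c₀ := by
  linarith [hB.b₀_nonneg, hB.β₀_nonneg, hB.c₀_nonneg, hB.γ₀_nonneg, hB.Γ₀_nonneg]

lemma rpow_two_div_succ_pow {a : ℝ} (ha : 0 ≤ a) {n m M : ℕ} (h : (n + 1) * m = 2 * M) :
    (a ^ ((2 : ℝ) / (n + 1))) ^ M = a ^ m := by
  rw [← Real.rpow_mul_natCast ha, ← Real.rpow_natCast]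
  congr 1
  have h' : ((n : ℝ) + 1) * m = 2 * M := by exact_mod_cast h
  field_simp
  linarith

section normN

variable {N : ℕ}

lemma normN_nonneg (x : Fin N → ℝ) : 0 ≤ normN N x := Real.sqrt_nonneg _

lemma sq_normN (x : Fin N → ℝ) :
    normN N x ^ 2 = ∑ i : Fin N, |x i| ^ ((2 : ℝ) / ((i : ℕ) + 1)) :=
  Real.sq_sqrt (sum_nonneg fun _ _ => by positivity)

lemma abs_le_normN_pow (x : Fin N → ℝ) (i : Fin N) : |x i| ≤ normN N x ^ ((i : ℕ) + 1) := by
  have h : |x i| ^ ((2 : ℝ) / ((i : ℕ) + 1)) ≤ normN N x ^ 2 := by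
    rw [sq_normN]
    exact single_le_sum (f := fun j : Fin N => |x j| ^ ((2 : ℝ) / ((j : ℕ) + 1)))
      (fun _ _ => by positivity) (mem_univ i)
  have h2 := pow_le_pow_left₀ (Real.rpow_nonneg (abs_nonneg _) _) h ((i : ℕ) + 1)
  rw [rpow_two_div_succ_pow (abs_nonneg _) (mul_comm _ _), pow_right_comm] at h2
  exact (pow_le_pow_iff_left₀ (abs_nonneg _) (pow_nonneg (normN_nonneg x) _) two_ne_zero).1 h2

lemma abs_extComp_le (x : Fin N → ℝ) (j : ℤ) : |extComp N x j| ≤ (1 + normN N x) ^ j := by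
  have hx := normN_nonneg x
  unfold extComp
  split_ifs with hj hj0
  · have hj' : j = (((j - 1).toNat + 1 : ℕ) : ℤ) := by omega
    conv_rhs => rw [hj', zpow_natCast]
    exact (abs_le_normN_pow x _).trans (pow_le_pow_left₀ hx (by linarith) _)
  · simp [hj0]
  · simp only [abs_zero]
    positivity

end normN

section momentRHS

variable {N : ℕ} {b β c γ Γ : (Fin N → ℝ) → ℝ} {b₀ β₀ c₀ γ₀ Γ₀ : ℝ}

lemma abs_momentRHS_le_s8 (hB : AssumptionsB N b β c γ Γ b₀ β₀ c₀ γ₀ Γ₀) (x : Fin N → ℝ)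
    (k : Fin N) :
    |momentRHS N b β c γ Γ x k| ≤
      (N : ℝ) ^ 2 * (β₀ + Γ₀ + b₀ + γ₀ + c₀) * (1 + normN N x) ^ ((k : ℕ) + 1) := by
  obtain ⟨hb₀, hβ₀, hc₀, hγ₀, hΓ₀, hβ, hΓ, hb, hγ, hc⟩ := hB
  set s := 1 + normN N x
  have hs : 0 < s := by have := normN_nonneg x; positivity
  have hk : ((k : ℕ) : ℝ) + 1 ≤ N := by exact_mod_cast k.isLt
  have hlin : ((k : ℕ) : ℝ) + 1 ≤ (N : ℝ) ^ 2 := by nlinarith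
  have hquad : ((k : ℕ) + 1 : ℝ) * (k : ℕ) / 2 ≤ (N : ℝ) ^ 2 := by nlinarith
  have hc' : |c x| ≤ c₀ * s ^ 2 := (hc x).trans (by gcongr; nlinarith [normN_nonneg x])
  have hxk : |x k| ≤ s ^ ((k : ℕ) + 1) :=
    (abs_le_normN_pow x k).trans (pow_le_pow_left₀ (normN_nonneg x) (by linarith) _)
  have hek : |extComp N x (k : ℕ)| ≤ s ^ (k : ℕ) := by
    simpa only [zpow_natCast] using abs_extComp_le x (k : ℕ)
  have hek' : s ^ 2 * |extComp N x ((k : ℕ) - 1)| ≤ s ^ ((k : ℕ) + 1) := by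
    calc s ^ 2 * |extComp N x ((k : ℕ) - 1)| ≤ s ^ 2 * s ^ (((k : ℕ) : ℤ) - 1) := by
          gcongr; exact abs_extComp_le x _
      _ = s ^ ((k : ℕ) + 1) := by
          rw [← zpow_natCast, ← zpow_natCast, ← zpow_add₀ hs.ne']
          congr 1
          push_cast
          ring
  set a₁ : ℝ := (k : ℕ) + 1
  set a₂ : ℝ := ((k : ℕ) + 1 : ℝ) * (k : ℕ) / 2
  have ha₁ : 0 ≤ a₁ := by positivity
  have ha₂ : 0 ≤ a₂ := by positivity
  have habs (u v : ℝ) : |a₁ * u + a₂ * v| ≤ a₁ * |u| + a₂ * |v| :=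
    (abs_add_le _ _).trans (by rw [abs_mul, abs_mul, abs_of_nonneg ha₁, abs_of_nonneg ha₂])
  calc |momentRHS N b β c γ Γ x k|
      ≤ (a₁ * |β x| + a₂ * |Γ x|) * |x k| + (a₁ * |b x| + a₂ * |γ x|) * |extComp N x (k : ℕ)|
          + a₂ * |c x| * |extComp N x ((k : ℕ) - 1)| := by
        show |(a₁ * β x + a₂ * Γ x) * x k + (a₁ * b x + a₂ * γ x) * extComp N x (k : ℕ)
          + a₂ * c x * extComp N x ((k : ℕ) - 1)| ≤ _
        refine (abs_add_three _ _ _).trans ?_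
        simp only [abs_mul, abs_of_nonneg ha₂]
        gcongr <;> exact habs _ _
    _ ≤ (N ^ 2 * β₀ + N ^ 2 * Γ₀) * s ^ ((k : ℕ) + 1)
          + (N ^ 2 * (b₀ * s) + N ^ 2 * (γ₀ * s)) * s ^ (k : ℕ)
          + N ^ 2 * (c₀ * s ^ 2) * |extComp N x ((k : ℕ) - 1)| := by
        gcongr
        exacts [hβ x, hΓ x, hb x, hγ x]
    _ = (N : ℝ) ^ 2 * ((β₀ + Γ₀) * s ^ ((k : ℕ) + 1) + (b₀ + γ₀) * (s * s ^ (k : ℕ))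
          + c₀ * (s ^ 2 * |extComp N x ((k : ℕ) - 1)|)) := by ring
    _ ≤ (N : ℝ) ^ 2 * ((β₀ + Γ₀) * s ^ ((k : ℕ) + 1) + (b₀ + γ₀) * s ^ ((k : ℕ) + 1)
          + c₀ * s ^ ((k : ℕ) + 1)) := by
        rw [← pow_succ']
        gcongr
    _ = (N : ℝ) ^ 2 * (β₀ + Γ₀ + b₀ + γ₀ + c₀) * s ^ ((k : ℕ) + 1) := by ring

end momentRHS

section lyapunov

variable {N : ℕ}

def lyapExp (N : ℕ) (i : Fin N) : ℕ := 2 * (N.factorial / ((i : ℕ) + 1))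

lemma succ_mul_lyapExp (i : Fin N) : ((i : ℕ) + 1) * lyapExp N i = 2 * N.factorial := by
  obtain ⟨q, hq⟩ := Nat.dvd_factorial (Nat.add_one_pos _) i.isLt
  rw [lyapExp, hq, Nat.mul_div_cancel_left _ (Nat.add_one_pos _)]
  ring

lemma even_lyapExp (i : Fin N) : Even (lyapExp N i) := even_two_mul _

noncomputable def lyapunov (N : ℕ) (x : Fin N → ℝ) : ℝ :=
  1 + (N : ℝ) ^ (N.factorial - 1) * ∑ i, x i ^ lyapExp N i

noncomputable def lyapunovDeriv (N : ℕ) (x v : Fin N → ℝ) : ℝ :=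
  (N : ℝ) ^ (N.factorial - 1) * ∑ k, (lyapExp N k : ℝ) * x k ^ (lyapExp N k - 1) * v k

lemma one_add_normN_pow_le_lyapunov (x : Fin N → ℝ) :
    1 + normN N x ^ (2 * N.factorial) ≤ lyapunov N x := by
  have hpow : ∀ i : Fin N, (|x i| ^ ((2 : ℝ) / ((i : ℕ) + 1))) ^ N.factorial = x i ^ lyapExp N i :=
    fun i => by
      rw [rpow_two_div_succ_pow (abs_nonneg _) (succ_mul_lyapExp i), (even_lyapExp i).pow_abs]
  obtain ⟨n, hn⟩ := Nat.exists_eq_add_one.2 N.factorial_pos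
  have := pow_sum_le_card_mul_sum_pow (s := univ)
    (fun i _ => Real.rpow_nonneg (abs_nonneg (x i)) ((2 : ℝ) / ((i : ℕ) + 1))) n
  rw [hn] at hpow
  rw [lyapunov, pow_mul, sq_normN, hn, Nat.add_sub_cancel]
  gcongr
  simpa only [card_univ, Fintype.card_fin, hpow] using this

lemma normN_pow_le_lyapunov (x : Fin N → ℝ) : normN N x ^ (2 * N) ≤ lyapunov N x := by
  refine le_trans ?_ (one_add_normN_pow_le_lyapunov x)
  rcases le_total (normN N x) 1 with h | h
  · have := pow_le_one₀ (normN_nonneg x) h (n := 2 * N)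
    linarith [pow_nonneg (normN_nonneg x) (2 * N.factorial)]
  · have := pow_le_pow_right₀ h (Nat.mul_le_mul_left 2 (Nat.self_le_factorial N))
    linarith

lemma lyapunov_nonneg (x : Fin N → ℝ) : 0 ≤ lyapunov N x :=
  (add_nonneg zero_le_one (pow_nonneg (normN_nonneg x) _)).trans
    (one_add_normN_pow_le_lyapunov x)

lemma hasDerivWithinAt_lyapunov {z : ℝ → Fin N → ℝ} {v : Fin N → ℝ} {s : Set ℝ} {t : ℝ}
    (hz : ∀ k, HasDerivWithinAt (fun u => z u k) (v k) s t) :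
    HasDerivWithinAt (fun u => lyapunov N (z u)) (lyapunovDeriv N (z t) v) s t :=
  ((HasDerivWithinAt.fun_sum fun k _ => (hz k).pow (lyapExp N k)).const_mul _).const_add 1

lemma abs_lyapunovDeriv_le {x v : Fin N → ℝ} {s C : ℝ} (hs : 0 ≤ s)
    (hx : ∀ k : Fin N, |x k| ≤ s ^ ((k : ℕ) + 1))
    (hv : ∀ k : Fin N, |v k| ≤ C * s ^ ((k : ℕ) + 1)) :
    |lyapunovDeriv N x v| ≤
      (N : ℝ) ^ (N.factorial - 1) * (N * (2 * N.factorial * C)) * s ^ (2 * N.factorial) := by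
  have hterm (k : Fin N) : |(lyapExp N k : ℝ) * x k ^ (lyapExp N k - 1) * v k| ≤
      2 * N.factorial * C * s ^ (2 * N.factorial) := by
    have hpos : lyapExp N k ≠ 0 := fun h => by
      simpa [h, N.factorial_ne_zero] using succ_mul_lyapExp k
    have hle : (lyapExp N k : ℝ) ≤ 2 * N.factorial := by
      have := Nat.le_of_dvd (by positivity) (Dvd.intro_left _ (succ_mul_lyapExp k))
      exact_mod_cast this
    calc |(lyapExp N k : ℝ) * x k ^ (lyapExp N k - 1) * v k|
        = lyapExp N k * |x k| ^ (lyapExp N k - 1) * |v k| := by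
          rw [abs_mul, abs_mul, abs_pow, Nat.abs_cast]
      _ ≤ 2 * N.factorial * (s ^ ((k : ℕ) + 1)) ^ (lyapExp N k - 1) * (C * s ^ ((k : ℕ) + 1)) := by
          gcongr
          exacts [hx k, hv k]
      _ = 2 * N.factorial * C * s ^ (2 * N.factorial) := by
          rw [← succ_mul_lyapExp k, pow_mul, ← pow_sub_one_mul hpos]
          ring
  calc |lyapunovDeriv N x v|
      ≤ (N : ℝ) ^ (N.factorial - 1) * ∑ _k : Fin N, 2 * N.factorial * C * s ^ (2 * N.factorial) := by
        rw [lyapunovDeriv, abs_mul, abs_of_nonneg (by positivity)]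
        gcongr
        exact (abs_sum_le_sum_abs _ _).trans (sum_le_sum fun k _ => hterm k)
    _ = (N : ℝ) ^ (N.factorial - 1) * (N * (2 * N.factorial * C)) * s ^ (2 * N.factorial) := by
        rw [sum_const, card_univ, Fintype.card_fin, nsmul_eq_mul]
        ring

end lyapunov

lemma exists_abs_lyapunovDeriv_momentRHS_le {N : ℕ} {b β c γ Γ : (Fin N → ℝ) → ℝ}
    {b₀ β₀ c₀ γ₀ Γ₀ : ℝ} (hB : AssumptionsB N b β c γ Γ b₀ β₀ c₀ γ₀ Γ₀) :
    ∃ K, 0 ≤ K ∧ ∀ x : Fin N → ℝ,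
      |lyapunovDeriv N x (momentRHS N b β c γ Γ x)| ≤ K * lyapunov N x := by
  set C := (N : ℝ) ^ 2 * (β₀ + Γ₀ + b₀ + γ₀ + c₀)
  have hC : 0 ≤ C := mul_nonneg (sq_nonneg _) hB.sum_constants_nonneg
  set M := N.factorial
  refine ⟨(N : ℝ) ^ (M - 1) * (N * (2 * M * C)) * 2 ^ (2 * M - 1), by positivity, fun x => ?_⟩
  have hx := normN_nonneg x
  calc |lyapunovDeriv N x (momentRHS N b β c γ Γ x)|
      ≤ (N : ℝ) ^ (M - 1) * (N * (2 * M * C)) * (1 + normN N x) ^ (2 * M) :=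
        abs_lyapunovDeriv_le (by positivity)
          (fun k => (abs_le_normN_pow x k).trans (pow_le_pow_left₀ hx (by linarith) _))
          (abs_momentRHS_le_s8 hB x)
    _ ≤ (N : ℝ) ^ (M - 1) * (N * (2 * M * C)) *
          (2 ^ (2 * M - 1) * (1 + normN N x ^ (2 * M))) := by
        gcongr
        simpa only [one_pow] using add_pow_le zero_le_one hx (2 * M)
    _ ≤ (N : ℝ) ^ (M - 1) * (N * (2 * M * C)) * (2 ^ (2 * M - 1) * lyapunov N x) := by
        gcongr
        exact one_add_normN_pow_le_lyapunov x
    _ = _ := by ring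

theorem norm_le_mul_exp_of_norm_deriv_le {E : Type*} [NormedAddCommGroup E] [NormedSpace ℝ E]
    {f f' : ℝ → E} {K a T : ℝ}
    (hf : ∀ t ∈ Ico a T, HasDerivWithinAt f (f' t) (Ico a T) t)
    (bound : ∀ t ∈ Ico a T, ‖f' t‖ ≤ K * ‖f t‖) :
    ∀ t ∈ Ico a T, ‖f t‖ ≤ ‖f a‖ * exp (K * (t - a)) := by
  intro t ht
  have hIcc : Icc a t ⊆ Ico a T := Icc_subset_Ico_right ht.2
  have hIco : Ico a t ⊆ Ico a T := Ico_subset_Ico_right ht.2.le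
  have := norm_le_gronwallBound_of_norm_deriv_right_le (ε := 0)
    (fun u hu => (hf u (hIcc hu)).continuousWithinAt.mono hIcc)
    (fun u hu => (hf u (hIco hu)).mono_of_mem_nhdsWithin (Ico_mem_nhdsGE_of_mem (hIco hu)))
    le_rfl (fun u hu => by simpa only [add_zero] using bound u (hIco hu)) t (right_mem_Icc.2 ht.1)
  rwa [gronwallBound_ε0] at this

theorem stmt_8_general (N : ℕ)
    (b β c γ Γ : (Fin N → ℝ) → ℝ)
    (b₀ β₀ c₀ γ₀ Γ₀ : ℝ) (hb₀ : 0 ≤ b₀) (hβ₀ : 0 ≤ β₀) (hc₀ : 0 ≤ c₀)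
    (hγ₀ : 0 ≤ γ₀) (hΓ₀ : 0 ≤ Γ₀)
    (hβb : ∀ x, |β x| ≤ β₀) (hΓb : ∀ x, |Γ x| ≤ Γ₀)
    (hbb : ∀ x : Fin N → ℝ, |b x| ≤ b₀ * (1 + normN N x))
    (hγb : ∀ x : Fin N → ℝ, |γ x| ≤ γ₀ * (1 + normN N x))
    (hcb : ∀ x : Fin N → ℝ, |c x| ≤ c₀ * (1 + (normN N x) ^ 2))
    (z₀ : Fin N → ℝ) :
    ∃ g : ℝ → ℝ,
      ContinuousOn g (Set.Ici 0) ∧ MonotoneOn g (Set.Ici 0) ∧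
      (∀ t ∈ Set.Ici (0 : ℝ), 0 ≤ g t) ∧
      ∀ (T : ℝ) (z : ℝ → Fin N → ℝ), z 0 = z₀ →
        IsMomentSol N b β c γ Γ (Set.Ico 0 T) z →
        ∀ t ∈ Set.Ico (0 : ℝ) T, (normN N (z t)) ^ (2 * N) ≤ g t := by
  obtain ⟨K, hK, hderiv_le⟩ := exists_abs_lyapunovDeriv_momentRHS_le
    ⟨hb₀, hβ₀, hc₀, hγ₀, hΓ₀, hβb, hΓb, hbb, hγb, hcb⟩
  have hV₀ := lyapunov_nonneg z₀
  have habs (x : Fin N → ℝ) : |lyapunov N x| = lyapunov N x := abs_of_nonneg (lyapunov_nonneg x)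
  refine ⟨fun t => lyapunov N z₀ * exp (K * t), by fun_prop, fun t _ t' _ htt' => ?_,
    fun t _ => by positivity, fun T z hz₀ hz t ht => ?_⟩
  · dsimp only
    gcongr
  · have := norm_le_mul_exp_of_norm_deriv_le (f := fun u => lyapunov N (z u))
      (fun u hu => hasDerivWithinAt_lyapunov fun k => hz k u hu)
      (fun u _ => by simpa only [Real.norm_eq_abs, habs] using hderiv_le (z u)) t ht
    simp only [Real.norm_eq_abs, habs, hz₀, sub_zero] at this
    exact (normN_pow_le_lyapunov (z t)).trans this

/-- Under Assumptions B, for each initial value there is a continuous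
nondecreasing function `g` on `[0,∞)` (depending only on `N`, `z₀` and the constants) bounding
`‖z(t)‖_N^{2N}` along every solution of the moment ODE system started at `z₀`. -/
theorem stmt_8 (N : ℕ) (hN : 0 < N)
    (b β c γ Γ : (Fin N → ℝ) → ℝ)
    (b₀ β₀ c₀ γ₀ Γ₀ : ℝ) (hb₀ : 0 ≤ b₀) (hβ₀ : 0 ≤ β₀) (hc₀ : 0 ≤ c₀)
    (hγ₀ : 0 ≤ γ₀) (hΓ₀ : 0 ≤ Γ₀)
    (hβb : ∀ x, |β x| ≤ β₀) (hΓb : ∀ x, |Γ x| ≤ Γ₀)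
    (hbb : ∀ x : Fin N → ℝ, |b x| ≤ b₀ * (1 + normN N x))
    (hγb : ∀ x : Fin N → ℝ, |γ x| ≤ γ₀ * (1 + normN N x))
    (hcb : ∀ x : Fin N → ℝ, |c x| ≤ c₀ * (1 + (normN N x) ^ 2))
    (z₀ : Fin N → ℝ) :
    ∃ g : ℝ → ℝ,
      ContinuousOn g (Set.Ici 0) ∧ MonotoneOn g (Set.Ici 0) ∧
      (∀ t ∈ Set.Ici (0 : ℝ), 0 ≤ g t) ∧
      ∀ (T : ℝ) (z : ℝ → Fin N → ℝ), z 0 = z₀ →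
        IsMomentSol N b β c γ Γ (Set.Ico 0 T) z →
        ∀ t ∈ Set.Ico (0 : ℝ) T, (normN N (z t)) ^ (2 * N) ≤ g t :=
  stmt_8_general N b β c γ Γ b₀ β₀ c₀ γ₀ Γ₀ hb₀ hβ₀ hc₀ hγ₀ hΓ₀ hβb hΓb hbb hγb hcb z₀
end

section
/- Let N ≥ 1, let b, c, γ : ℝ^N → [0,∞) be continuous maps with nonnegative values, and let β, Γ ∈ ℝ be constants. Let z : [0,T] → ℝ^N be a differentiable solution of the moment ODE system in which the maps β(·) and Γ(·) are the constants β and Γ, and suppose z_k(0) > 0 for every k ∈ {1,…,N}. Then for every k ∈ {1,…,N} and every t ∈ [0,T]: z_k(t) ≥ z_k(0)·exp( t·( k·β + (k(k-1)/2)·Γ ) ); in particular every component of z remains strictly positive on [0,T]. -/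
open MeasureTheory

/-! Since `b, c, γ ≥ 0`, the equation for `z_k` gives `z_k' ≥ L_k z_k` with
`L_k = kβ + k(k-1)Γ/2` as soon as `z_{k-1}` and `z_{k-2}` are nonnegative, so `z_k e^{-L_k t}`
is nondecreasing. Positivity of all components then follows by induction on `k`, and feeds
back into the comparison for every `k`. -/

open Set Real

theorem le_mul_exp_of_mul_le_derivWithin {f f' : ℝ → ℝ} {L a b : ℝ}
    (hf : ∀ t ∈ Icc a b, HasDerivWithinAt f (f' t) (Icc a b) t)
    (hle : ∀ t ∈ Icc a b, L * f t ≤ f' t) {t : ℝ} (ht : t ∈ Icc a b) :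
    f a * exp ((t - a) * L) ≤ f t := by
  -- `f` grows at least like `exp (s * L)` because `exp (-(s * L)) * f s` is monotone.
  have hmono : MonotoneOn (fun s => exp (-(s * L)) * f s) (Icc a b) := by
    refine monotoneOn_of_hasDerivWithinAt_nonneg (convex_Icc a b)
      (f' := fun s => exp (-(s * L)) * (f' s - L * f s)) ?_ ?_ ?_
    · exact fun s hs => (Continuous.continuousWithinAt (by fun_prop)).mul
        (hf s hs).continuousWithinAt
    · intro s hs
      have hexp : HasDerivAt (fun u => exp (-(u * L))) (exp (-(s * L)) * -(1 * L)) s :=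
        ((hasDerivAt_id s).mul_const L).neg.exp
      exact (hexp.hasDerivWithinAt.mul ((hf s (interior_subset hs)).mono interior_subset)
        ).congr_deriv (by ring)
    · exact fun s hs => mul_nonneg (exp_pos _).le (sub_nonneg.2 (hle s (interior_subset hs)))
  have ha : a ∈ Icc a b := ⟨le_rfl, ht.1.trans ht.2⟩
  have hat := hmono ha ht ht.1
  calc f a * exp ((t - a) * L)
      = exp (t * L) * (exp (-(a * L)) * f a) := by
        rw [sub_mul, exp_sub, exp_neg]; field_simp
    _ ≤ exp (t * L) * (exp (-(t * L)) * f t) := by gcongr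
    _ = f t := by rw [← mul_assoc, ← exp_add, add_neg_cancel, exp_zero, one_mul]

theorem extComp_nonneg {N : ℕ} {x : Fin N → ℝ} {j : ℤ}
    (hx : ∀ i : Fin N, ((i : ℕ) : ℤ) < j → 0 ≤ x i) : 0 ≤ extComp N x j := by
  unfold extComp
  split_ifs with hj
  · exact hx _ (by simp only; omega)
  · exact zero_le_one
  · exact le_rfl

theorem mul_le_momentRHS {N : ℕ} {b β c γ Γ : (Fin N → ℝ) → ℝ} {x : Fin N → ℝ} {k : Fin N}
    (hb : 0 ≤ b x) (hc : 0 ≤ c x) (hγ : 0 ≤ γ x) (hx : ∀ i < k, 0 ≤ x i) :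
    (((k : ℕ) + 1 : ℝ) * β x + (((k : ℕ) + 1 : ℝ) * (k : ℕ) / 2) * Γ x) * x k
      ≤ momentRHS N b β c γ Γ x k := by
  have hx' : ∀ i : Fin N, ((i : ℕ) : ℤ) < (k : ℕ) → 0 ≤ x i :=
    fun i hi => hx i (Fin.lt_def.2 (by omega))
  have h₁ : 0 ≤ extComp N x ((k : ℕ) : ℤ) := extComp_nonneg hx'
  have h₂ : 0 ≤ extComp N x (((k : ℕ) : ℤ) - 1) :=
    extComp_nonneg fun i hi => hx' i (by omega)
  unfold momentRHS
  have : 0 ≤ (((k : ℕ) + 1 : ℝ) * b x + (((k : ℕ) + 1 : ℝ) * (k : ℕ) / 2) * γ x)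
      * extComp N x ((k : ℕ) : ℤ) + (((k : ℕ) + 1 : ℝ) * (k : ℕ) / 2) * c x
      * extComp N x (((k : ℕ) : ℤ) - 1) := by positivity
  linarith

section ConstantRates

variable {N : ℕ} {b c γ : (Fin N → ℝ) → ℝ} {β Γ T : ℝ} {z : ℝ → Fin N → ℝ}

theorem IsMomentSol.mul_exp_le (hz : IsMomentSol N b (fun _ => β) c γ (fun _ => Γ) (Icc 0 T) z)
    (hb : ∀ x, 0 ≤ b x) (hc : ∀ x, 0 ≤ c x) (hγ : ∀ x, 0 ≤ γ x) {k : Fin N}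
    (hlow : ∀ i < k, ∀ t ∈ Icc 0 T, 0 ≤ z t i) {t : ℝ} (ht : t ∈ Icc 0 T) :
    z 0 k * exp (t * (((k : ℕ) + 1 : ℝ) * β + (((k : ℕ) + 1 : ℝ) * (k : ℕ) / 2) * Γ))
      ≤ z t k := by
  have hrate : ∀ s ∈ Icc 0 T, (((k : ℕ) + 1 : ℝ) * β + (((k : ℕ) + 1 : ℝ) * (k : ℕ) / 2) * Γ)
      * z s k ≤ momentRHS N b (fun _ => β) c γ (fun _ => Γ) (z s) k :=
    fun s hs => mul_le_momentRHS (β := fun _ => β) (Γ := fun _ => Γ) (hb _) (hc _) (hγ _)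
      fun i hi => hlow i hi s hs
  simpa only [sub_zero] using le_mul_exp_of_mul_le_derivWithin (hz k) hrate ht

theorem IsMomentSol.pos (hz : IsMomentSol N b (fun _ => β) c γ (fun _ => Γ) (Icc 0 T) z)
    (hb : ∀ x, 0 ≤ b x) (hc : ∀ x, 0 ≤ c x) (hγ : ∀ x, 0 ≤ γ x) (hz0 : ∀ k, 0 < z 0 k)
    (k : Fin N) {t : ℝ} (ht : t ∈ Icc 0 T) : 0 < z t k := by
  induction k using WellFoundedLT.induction generalizing t with
  | ind k ih =>
    exact (mul_pos (hz0 k) (exp_pos _)).trans_le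
      (hz.mul_exp_le hb hc hγ (fun i hi s hs => (ih i hi hs).le) ht)

end ConstantRates

theorem stmt_10_general (N : ℕ)
    (b c γ : (Fin N → ℝ) → ℝ)
    (hbnn : ∀ x, 0 ≤ b x) (hcnn : ∀ x, 0 ≤ c x) (hγnn : ∀ x, 0 ≤ γ x)
    (β Γ : ℝ)
    (T : ℝ) (z : ℝ → Fin N → ℝ)
    (hz : IsMomentSol N b (fun _ => β) c γ (fun _ => Γ) (Set.Icc 0 T) z)
    (hz0 : ∀ k : Fin N, 0 < z 0 k) :
    ∀ k : Fin N, ∀ t ∈ Set.Icc (0 : ℝ) T,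
      z 0 k * Real.exp (t * (((k : ℕ) + 1 : ℝ) * β
        + (((k : ℕ) + 1 : ℝ) * (k : ℕ) / 2) * Γ)) ≤ z t k ∧ 0 < z t k := by
  have hpos : ∀ i : Fin N, ∀ s ∈ Icc 0 T, 0 < z s i :=
    fun i _ hs => hz.pos hbnn hcnn hγnn hz0 i hs
  exact fun k t ht =>
    ⟨hz.mul_exp_le hbnn hcnn hγnn (fun i _ s hs => (hpos i s hs).le) ht, hpos k t ht⟩

/-- If `b, c, γ` are continuous and nonnegative, `β, Γ` are constants, and
all components of the solution of the moment ODE system start strictly positive, then each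
component `z_k` stays above `z_k(0)·exp(t(kβ + k(k-1)Γ/2))`; in particular each component
remains strictly positive on `[0,T]`.
(Here `k : Fin N` represents the `(k+1)`-th one-based component.) -/
theorem stmt_10 (N : ℕ) (hN : 0 < N)
    (b c γ : (Fin N → ℝ) → ℝ)
    (hbc : Continuous b) (hcc : Continuous c) (hγc : Continuous γ)
    (hbnn : ∀ x, 0 ≤ b x) (hcnn : ∀ x, 0 ≤ c x) (hγnn : ∀ x, 0 ≤ γ x)
    (β Γ : ℝ)
    (T : ℝ) (z : ℝ → Fin N → ℝ)
    (hz : IsMomentSol N b (fun _ => β) c γ (fun _ => Γ) (Set.Icc 0 T) z)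
    (hz0 : ∀ k : Fin N, 0 < z 0 k) :
    ∀ k : Fin N, ∀ t ∈ Set.Icc (0 : ℝ) T,
      z 0 k * Real.exp (t * (((k : ℕ) + 1 : ℝ) * β
        + (((k : ℕ) + 1 : ℝ) * (k : ℕ) / 2) * Γ)) ≤ z t k ∧ 0 < z t k :=
  stmt_10_general N b c γ hbnn hcnn hγnn β Γ T z hz hz0
end

section
/- Let (Ω, F, μ) be a probability space, N ≥ 1, and Z : Ω → ℝ a random variable with E[|Z|^N] < ∞ (so that Z^i is integrable for every i ∈ {1,…,N}). Then ‖( E[Z], E[Z²], …, E[Z^N] )‖_N ≤ √N · ( E[|Z|^N] )^{1/N}. -/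
open MeasureTheory

/-!
Each moment is controlled by the `N`-th absolute moment `M := E[|Z|^N]`: by Lyapunov's
inequality (monotonicity of `p ↦ ‖Z‖_{L^p}` on a probability space),
`|E[Z^k]| ≤ E[|Z|^k] ≤ (M^{1/N})^k` for `k ≤ N`. A vector dominated coordinatewise by
`(a, a², …, a^N)` has all `N` summands of `‖·‖_N²` at most `a²`, hence `‖·‖_N ≤ √N · a`.
-/

theorem normN_le_sqrt_mul {N : ℕ} {x : Fin N → ℝ} {a : ℝ} (ha : 0 ≤ a)
    (hx : ∀ i : Fin N, |x i| ≤ a ^ ((i : ℕ) + 1)) : normN N x ≤ √N * a := by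
  have hterm : ∀ i : Fin N, |x i| ^ ((2 : ℝ) / ((i : ℕ) + 1)) ≤ a ^ 2 := fun i ↦ by
    have hi : ((i : ℕ) : ℝ) + 1 ≠ 0 := by positivity
    calc |x i| ^ ((2 : ℝ) / ((i : ℕ) + 1))
        ≤ (a ^ ((i : ℕ) + 1)) ^ ((2 : ℝ) / ((i : ℕ) + 1)) :=
          Real.rpow_le_rpow (abs_nonneg _) (hx i) (by positivity)
      _ = a ^ 2 := by
          rw [← Real.rpow_natCast, ← Real.rpow_mul ha]
          push_cast
          rw [mul_div_cancel₀ _ hi]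
          norm_cast
  calc normN N x ≤ √(∑ _i : Fin N, a ^ 2) :=
        Real.sqrt_le_sqrt (Finset.sum_le_sum fun i _ ↦ hterm i)
    _ = √N * a := by
        rw [Finset.sum_const, Finset.card_univ, Fintype.card_fin, nsmul_eq_mul,
          Real.sqrt_mul (Nat.cast_nonneg N), Real.sqrt_sq ha]

section Lyapunov

variable {α : Type*} [MeasurableSpace α] {μ : Measure α} [IsProbabilityMeasure μ] {f : α → ℝ}

theorem integral_abs_rpow_rpow_inv_le {p q : ℝ} (hp : 0 < p) (hpq : p ≤ q)
    (hf : AEStronglyMeasurable f μ) (hfq : Integrable (fun x ↦ |f x| ^ q) μ) :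
    (∫ x, |f x| ^ p ∂μ) ^ p⁻¹ ≤ (∫ x, |f x| ^ q ∂μ) ^ q⁻¹ := by
  have hq : 0 < q := hp.trans_le hpq
  have hp0 : ENNReal.ofReal p ≠ 0 := by simpa using hp
  have hq0 : ENNReal.ofReal q ≠ 0 := by simpa using hq
  have hexp : ENNReal.ofReal p ≤ ENNReal.ofReal q := ENNReal.ofReal_le_ofReal hpq
  have hmem_q : MemLp f (ENNReal.ofReal q) μ := by
    rw [← memLp_norm_rpow_iff hf hq0 ENNReal.ofReal_ne_top, ENNReal.div_self hq0 ENNReal.ofReal_ne_top,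
      memLp_one_iff_integrable]
    simpa [ENNReal.toReal_ofReal hq.le] using hfq
  have hmem_p := hmem_q.mono_exponent hexp
  have hle := eLpNorm_le_eLpNorm_of_exponent_le hexp hf (μ := μ)
  rw [hmem_p.eLpNorm_eq_integral_rpow_norm hp0 ENNReal.ofReal_ne_top,
    hmem_q.eLpNorm_eq_integral_rpow_norm hq0 ENNReal.ofReal_ne_top,
    ENNReal.ofReal_le_ofReal_iff (by positivity)] at hle
  simpa [ENNReal.toReal_ofReal hp.le, ENNReal.toReal_ofReal hq.le] using hle

theorem abs_integral_pow_le {k n : ℕ} (hk : 0 < k) (hkn : k ≤ n)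
    (hf : AEStronglyMeasurable f μ) (hfn : Integrable (fun x ↦ |f x| ^ n) μ) :
    |∫ x, f x ^ k ∂μ| ≤ ((∫ x, |f x| ^ n ∂μ) ^ ((1 : ℝ) / n)) ^ k := by
  have hk' : (0 : ℝ) < k := by exact_mod_cast hk
  have hlyap := integral_abs_rpow_rpow_inv_le (f := f) hk' (Nat.cast_le.mpr hkn) hf
    (by simpa only [Real.rpow_natCast] using hfn)
  simp only [Real.rpow_natCast] at hlyap
  calc |∫ x, f x ^ k ∂μ| ≤ ∫ x, |f x| ^ k ∂μ := by
        simpa only [Real.norm_eq_abs, abs_pow] using norm_integral_le_integral_norm (fun x ↦ f x ^ k)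
    _ = ((∫ x, |f x| ^ k ∂μ) ^ (k : ℝ)⁻¹) ^ k := by
        rw [← Real.rpow_natCast, ← Real.rpow_mul (by positivity), inv_mul_cancel₀ hk'.ne',
          Real.rpow_one]
    _ ≤ ((∫ x, |f x| ^ n ∂μ) ^ ((1 : ℝ) / n)) ^ k := by
        rw [one_div]
        exact pow_le_pow_left₀ (by positivity) hlyap k

end Lyapunov

theorem stmt_13_general {Ω : Type*} [MeasurableSpace Ω] (μ : Measure Ω) [IsProbabilityMeasure μ]
    (N : ℕ) (Z : Ω → ℝ) (hZm : Measurable Z)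
    (hZint : Integrable (fun ω => |Z ω| ^ N) μ) :
    normN N (fun i => ∫ ω, (Z ω) ^ ((i : ℕ) + 1) ∂μ)
      ≤ Real.sqrt N * (∫ ω, |Z ω| ^ N ∂μ) ^ ((1 : ℝ) / N) :=
  normN_le_sqrt_mul (by positivity) fun i ↦
    abs_integral_pow_le i.succ_pos i.isLt hZm.aestronglyMeasurable hZint

/-- For a random variable `Z` with finite `N`-th absolute moment,
`‖(E[Z], …, E[Z^N])‖_N ≤ √N · (E[|Z|^N])^{1/N}`. -/
theorem stmt_13 {Ω : Type*} [MeasurableSpace Ω] (μ : Measure Ω) [IsProbabilityMeasure μ]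
    (N : ℕ) (hN : 0 < N) (Z : Ω → ℝ) (hZm : Measurable Z)
    (hZint : Integrable (fun ω => |Z ω| ^ N) μ) :
    normN N (fun i => ∫ ω, (Z ω) ^ ((i : ℕ) + 1) ∂μ)
      ≤ Real.sqrt N * (∫ ω, |Z ω| ^ N ∂μ) ^ ((1 : ℝ) / N) :=
  stmt_13_general μ N Z hZm hZint
end

section
/- Let (Ω, F, μ) be a probability space, G ⊆ F a sub-σ-algebra, N ≥ 1, and Z : Ω → ℝ a random variable with E[|Z|^N] < ∞ (so that Z^i is integrable for every i ∈ {1,…,N}). Then μ-almost everywhere: ‖( E[Z|G], E[Z²|G], …, E[Z^N|G] )‖_N ≤ √N · ( E[|Z|^N | G] )^{1/N}. -/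
open MeasureTheory

/-- Young-type pointwise inequality: `t^k ≤ (k/N)(λ^k/λ^N) t^N + ((N-k)/N) λ^k`. -/
lemma young_pt (k N : ℕ) (hk : 1 ≤ k) (hkN : k ≤ N) (hN : 0 < N) (t lam : ℝ)
    (ht : 0 ≤ t) (hlam : 0 < lam) :
    t ^ k ≤ ((k : ℝ)/N) * (lam ^ k / lam ^ N) * t ^ N + (((N : ℝ) - k)/N) * lam ^ k := by
  set u : ℝ := t / lam with hu
  have hu0 : 0 ≤ u := div_nonneg ht hlam.le
  have hNne : (N : ℝ) ≠ 0 := by positivity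
  have key : u ^ k ≤ ((k : ℝ)/N) * u ^ N + (((N : ℝ) - k)/N) * 1 := by
    have := Real.geom_mean_le_arith_mean2_weighted
      (w₁ := (k : ℝ)/N) (w₂ := ((N : ℝ) - k)/N) (p₁ := u ^ N) (p₂ := 1)
      (by positivity) (by
        have : (k : ℝ) ≤ N := by exact_mod_cast hkN
        have : (0:ℝ) ≤ (N : ℝ) - k := by linarith
        positivity) (by positivity) zero_le_one
        (by rw [← add_div, div_eq_one_iff_eq hNne]; ring)
    have hL : (u ^ N) ^ ((k : ℝ)/N) * (1 : ℝ) ^ (((N : ℝ) - k)/N) = u ^ k := by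
      rw [Real.one_rpow, mul_one, ← Real.rpow_natCast u N, ← Real.rpow_mul hu0]
      rw [show (N : ℝ) * ((k : ℝ)/N) = (k : ℝ) by field_simp]
      exact Real.rpow_natCast u k
    rw [hL] at this
    exact this
  have ht' : t = u * lam := by rw [hu, div_mul_cancel₀ _ hlam.ne']
  have h2 : t ^ k = u ^ k * lam ^ k := by rw [ht', mul_pow]
  have h3 : t ^ N = u ^ N * lam ^ N := by rw [ht', mul_pow]
  rw [h2, h3]
  have := mul_le_mul_of_nonneg_right key (pow_nonneg hlam.le k)
  calc u ^ k * lam ^ k ≤ (((k : ℝ)/N) * u ^ N + (((N : ℝ) - k)/N) * 1) * lam ^ k := this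
    _ = ((k : ℝ)/N) * (lam ^ k / lam ^ N) * (u ^ N * lam ^ N) + (((N : ℝ) - k)/N) * lam ^ k := by
        field_simp

/-- Key pointwise lemma: if `b ≤ (k/N)(q^k/q^N) a + ((N-k)/N) q^k` for all positive rationals `q`,
then `b ≤ a ^ (k/N)`. -/
lemma key_pt (k N : ℕ) (hk : 1 ≤ k) (hkN : k ≤ N) (hN : 0 < N) {a b : ℝ}
    (ha : 0 ≤ a)
    (h : ∀ q : ℚ, 0 < q →
      b ≤ ((k : ℝ)/N) * ((q : ℝ) ^ k / (q : ℝ) ^ N) * a + (((N : ℝ) - k)/N) * (q : ℝ) ^ k) :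
    b ≤ a ^ ((k : ℝ)/(N : ℝ)) := by
  have hNne : (N : ℝ) ≠ 0 := by positivity
  rcases eq_or_lt_of_le hkN with hkN' | hkN'
  · subst hkN'
    have := h 1 one_pos
    simpa [Real.rpow_natCast, div_self hNne, Real.rpow_one] using this
  -- k < N
  by_contra hc
  push_neg at hc
  set g : ℝ → ℝ := fun x => ((k : ℝ)/N) * (x ^ k / x ^ N) * a + (((N : ℝ) - k)/N) * x ^ k with hg
  -- find lam₀ > 0 with g lam₀ < b
  obtain ⟨lam₀, hlam₀, hglam₀⟩ : ∃ lam₀ : ℝ, 0 < lam₀ ∧ g lam₀ < b := by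
    rcases eq_or_lt_of_le ha with ha' | ha'
    · -- a = 0
      have hb0 : 0 < b := by
        have : a ^ ((k : ℝ)/(N : ℝ)) = 0 := by
          rw [← ha', Real.zero_rpow (by positivity)]
        linarith [hc, this.symm ▸ hc]
      have hNk : (0 : ℝ) < (N : ℝ) - k := by
        have : (k : ℝ) < N := by exact_mod_cast hkN'
        linarith
      refine ⟨min 1 (b * N / (2 * ((N : ℝ) - k))), by positivity, ?_⟩
      have hle1 : min 1 (b * N / (2 * ((N : ℝ) - k))) ≤ 1 := min_le_left _ _
      have hpos : 0 < min 1 (b * N / (2 * ((N : ℝ) - k))) := by positivity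
      have hpk : (min 1 (b * N / (2 * ((N : ℝ) - k)))) ^ k ≤ min 1 (b * N / (2 * ((N : ℝ) - k))) := by
        calc (min 1 (b * N / (2 * ((N : ℝ) - k)))) ^ k
            ≤ (min 1 (b * N / (2 * ((N : ℝ) - k)))) ^ 1 :=
              pow_le_pow_of_le_one hpos.le hle1 hk
          _ = _ := pow_one _
      have : g (min 1 (b * N / (2 * ((N : ℝ) - k)))) =
          (((N : ℝ) - k)/N) * (min 1 (b * N / (2 * ((N : ℝ) - k)))) ^ k := by
        simp [hg, ← ha']
      rw [this]
      calc (((N : ℝ) - k)/N) * (min 1 (b * N / (2 * ((N : ℝ) - k)))) ^ k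
          ≤ (((N : ℝ) - k)/N) * (b * N / (2 * ((N : ℝ) - k))) := by
            refine mul_le_mul_of_nonneg_left (hpk.trans (min_le_right _ _)) (by positivity)
        _ = b / 2 := by field_simp
        _ < b := by linarith
    · -- a > 0
      refine ⟨a ^ ((1 : ℝ)/N), Real.rpow_pos_of_pos ha' _, ?_⟩
      have hlk : (a ^ ((1 : ℝ)/N)) ^ k = a ^ ((k : ℝ)/N) := by
        rw [← Real.rpow_natCast (a ^ ((1 : ℝ)/N)) k, ← Real.rpow_mul ha]
        congr 1; field_simp
      have hlN : (a ^ ((1 : ℝ)/N)) ^ N = a := by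
        rw [← Real.rpow_natCast (a ^ ((1 : ℝ)/N)) N, ← Real.rpow_mul ha]
        rw [show (1 : ℝ)/N * N = 1 by field_simp, Real.rpow_one]
      have : g (a ^ ((1 : ℝ)/N)) = a ^ ((k : ℝ)/N) := by
        simp only [hg, hlk, hlN]
        field_simp
        ring
      rw [this]; exact hc
  -- density argument
  have hgc : ContinuousOn g (Set.Ioi (0 : ℝ)) := by
    apply ContinuousOn.add
    · exact ((continuousOn_const.mul (((continuous_pow k).continuousOn.div
        (continuous_pow N).continuousOn (fun x hx => pow_ne_zero _ (ne_of_gt hx))))).mul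
        continuousOn_const)
    · exact continuousOn_const.mul (continuous_pow k).continuousOn
  have hso : IsOpen (Set.Ioi (0 : ℝ) ∩ g ⁻¹' Set.Iio b) :=
    hgc.isOpen_inter_preimage isOpen_Ioi isOpen_Iio
  obtain ⟨q, hq⟩ := Rat.denseRange_cast.exists_mem_open hso ⟨lam₀, hlam₀, hglam₀⟩
  have hq0 : 0 < q := by exact_mod_cast Set.mem_Ioi.mp hq.1
  exact absurd (h q hq0) (not_le.mpr hq.2)

lemma normN_le_s16 (N : ℕ) (hN : 0 < N) (x : Fin N → ℝ) (a : ℝ) (ha : 0 ≤ a)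
    (h : ∀ i : Fin N, |x i| ≤ a ^ ((((i : ℕ) : ℝ) + 1)/N)) :
    normN N x ≤ Real.sqrt N * a ^ ((1 : ℝ)/N) := by
  have hNne : (N : ℝ) ≠ 0 := by positivity
  have hterm : ∀ i : Fin N, |x i| ^ ((2 : ℝ)/((i : ℕ) + 1)) ≤ a ^ ((2 : ℝ)/N) := by
    intro i
    have hie : (0 : ℝ) < ((i : ℕ) : ℝ) + 1 := by positivity
    calc |x i| ^ ((2 : ℝ)/((i : ℕ) + 1))
        ≤ (a ^ ((((i : ℕ) : ℝ) + 1)/N)) ^ ((2 : ℝ)/((i : ℕ) + 1)) :=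
          Real.rpow_le_rpow (abs_nonneg _) (h i) (by positivity)
      _ = a ^ (((((i : ℕ) : ℝ) + 1)/N) * ((2 : ℝ)/((i : ℕ) + 1))) := by
          rw [← Real.rpow_mul ha]
      _ = a ^ ((2 : ℝ)/N) := by
          congr 1; field_simp
  have hsum : ∑ i : Fin N, |x i| ^ ((2 : ℝ)/((i : ℕ) + 1)) ≤ (N : ℝ) * a ^ ((2 : ℝ)/N) := by
    calc ∑ i : Fin N, |x i| ^ ((2 : ℝ)/((i : ℕ) + 1))
        ≤ ∑ _i : Fin N, a ^ ((2 : ℝ)/N) := Finset.sum_le_sum fun i _ => hterm i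
      _ = (N : ℝ) * a ^ ((2 : ℝ)/N) := by
          rw [Finset.sum_const, Finset.card_fin, nsmul_eq_mul]
  have hs : Real.sqrt (a ^ ((2 : ℝ)/N)) = a ^ ((1 : ℝ)/N) := by
    rw [show (2 : ℝ)/N = ((1 : ℝ)/N) * ((2 : ℕ) : ℝ) by push_cast; ring,
      Real.rpow_mul ha, Real.rpow_natCast]
    exact Real.sqrt_sq (Real.rpow_nonneg ha _)
  calc normN N x ≤ Real.sqrt ((N : ℝ) * a ^ ((2 : ℝ)/N)) := Real.sqrt_le_sqrt hsum
    _ = Real.sqrt N * a ^ ((1 : ℝ)/N) := by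
        rw [Real.sqrt_mul (Nat.cast_nonneg N), hs]

/-- For a random variable `Z` with finite `N`-th absolute moment and a
sub-σ-algebra `m`, almost everywhere
`‖(E[Z|m], …, E[Z^N|m])‖_N ≤ √N · (E[|Z|^N | m])^{1/N}`. -/
theorem stmt_16 {Ω : Type*} (m : MeasurableSpace Ω) {mΩ : MeasurableSpace Ω} (μ : Measure Ω) [IsProbabilityMeasure μ]
    (hm : m ≤ mΩ)
    (N : ℕ) (hN : 0 < N) (Z : Ω → ℝ) (hZm : Measurable Z)
    (hZint : Integrable (fun ω => |Z ω| ^ N) μ) :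
    ∀ᵐ ω ∂μ,
      normN N (fun i => (μ[(fun ω' => (Z ω') ^ ((i : ℕ) + 1)) | m]) ω)
        ≤ Real.sqrt N * ((μ[(fun ω' => |Z ω'| ^ N) | m]) ω) ^ ((1 : ℝ) / N) := by
  have hZm' : Measurable[mΩ] Z := hZm
  -- integrability of |Z|^k for k ≤ N
  have hint_abs : ∀ k : ℕ, k ≤ N → Integrable (fun ω => |Z ω| ^ k) μ := by
    intro k hk
    have hmeas := (Measurable.pow_const (measurable_abs.comp hZm') k).aestronglyMeasurable (μ := μ)
    refine Integrable.mono' ((integrable_const (1 : ℝ)).add hZint)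
      hmeas (ae_of_all _ fun ω => ?_)
    simp only [Pi.add_apply]
    rw [Real.norm_eq_abs, abs_of_nonneg (pow_nonneg (abs_nonneg _) _)]
    rcases le_or_gt (|Z ω|) 1 with h1 | h1
    · have : |Z ω| ^ k ≤ 1 := pow_le_one₀ (abs_nonneg _) h1
      have h0 : 0 ≤ |Z ω| ^ N := pow_nonneg (abs_nonneg _) _
      linarith
    · have : |Z ω| ^ k ≤ |Z ω| ^ N := pow_le_pow_right₀ h1.le hk
      linarith
  have hint_pow : ∀ k : ℕ, k ≤ N → Integrable (fun ω => (Z ω) ^ k) μ := by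
    intro k hk
    have hmeas := (Measurable.pow_const hZm' k).aestronglyMeasurable (μ := μ)
    refine Integrable.mono' (hint_abs k hk) hmeas
      (ae_of_all _ fun ω => ?_)
    rw [Real.norm_eq_abs, abs_pow]
  -- Fact 1 : |E[Z^k|m]| ≤ E[|Z|^k|m]
  have fact1 : ∀ i : Fin N, ∀ᵐ ω ∂μ,
      |(μ[(fun ω' => (Z ω') ^ ((i : ℕ) + 1)) | m]) ω|
        ≤ (μ[(fun ω' => |Z ω'| ^ ((i : ℕ) + 1)) | m]) ω := by
    intro i
    have hk : (i : ℕ) + 1 ≤ N := i.isLt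
    have e1 : μ[(fun ω' => (Z ω') ^ ((i : ℕ) + 1)) | m]
        ≤ᵐ[μ] μ[(fun ω' => |Z ω'| ^ ((i : ℕ) + 1)) | m] :=
      condExp_mono (hint_pow _ hk) (hint_abs _ hk)
        (ae_of_all _ fun ω => by
          calc (Z ω) ^ ((i : ℕ) + 1) ≤ |(Z ω) ^ ((i : ℕ) + 1)| := le_abs_self _
            _ = |Z ω| ^ ((i : ℕ) + 1) := abs_pow _ _)
    have e2 : μ[(fun ω' => -((Z ω') ^ ((i : ℕ) + 1))) | m]
        ≤ᵐ[μ] μ[(fun ω' => |Z ω'| ^ ((i : ℕ) + 1)) | m] :=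
      condExp_mono ((hint_pow _ hk).neg) (hint_abs _ hk)
        (ae_of_all _ fun ω => by
          calc -((Z ω) ^ ((i : ℕ) + 1)) ≤ |(Z ω) ^ ((i : ℕ) + 1)| := neg_le_abs _
            _ = |Z ω| ^ ((i : ℕ) + 1) := abs_pow _ _)
    have e3 : μ[(fun ω' => -((Z ω') ^ ((i : ℕ) + 1))) | m]
        =ᵐ[μ] -μ[(fun ω' => (Z ω') ^ ((i : ℕ) + 1)) | m] :=
      condExp_neg _ m
    filter_upwards [e1, e2, e3] with ω h1 h2 h3
    rw [abs_le]
    constructor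
    · have := h2
      rw [h3] at this
      simpa using neg_le.mp (by simpa using this)
    · exact h1
  -- Fact 2 : E[|Z|^k|m] ≤ c * E[|Z|^N|m] + d
  have fact2 : ∀ i : Fin N, ∀ q : ℚ, 0 < q → ∀ᵐ ω ∂μ,
      (μ[(fun ω' => |Z ω'| ^ ((i : ℕ) + 1)) | m]) ω
        ≤ (((((i : ℕ) + 1 : ℕ)) : ℝ)/N) * ((q : ℝ) ^ ((i : ℕ) + 1) / (q : ℝ) ^ N)
            * (μ[(fun ω' => |Z ω'| ^ N) | m]) ω
          + (((N : ℝ) - (((i : ℕ) + 1 : ℕ) : ℝ))/N) * (q : ℝ) ^ ((i : ℕ) + 1) := by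
    intro i q hq
    set k : ℕ := (i : ℕ) + 1 with hkdef
    have hk : k ≤ N := i.isLt
    have hq' : (0 : ℝ) < (q : ℝ) := by exact_mod_cast hq
    set c : ℝ := ((k : ℕ) : ℝ)/N * ((q : ℝ) ^ k / (q : ℝ) ^ N) with hc
    set d : ℝ := (((N : ℝ) - ((k : ℕ) : ℝ))/N) * (q : ℝ) ^ k with hd
    have hmono : μ[(fun ω' => |Z ω'| ^ k) | m]
        ≤ᵐ[μ] μ[(fun ω' => c * |Z ω'| ^ N + d) | m] := by
      refine condExp_mono (hint_abs _ hk) ?_ (ae_of_all _ fun ω => ?_)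
      · exact (hZint.const_mul c).add (integrable_const d)
      · have := young_pt k N (Nat.le_add_left 1 _) hk hN (|Z ω|) (q : ℝ)
          (abs_nonneg _) hq'
        calc |Z ω| ^ k ≤ ((k : ℝ)/N) * ((q : ℝ) ^ k / (q : ℝ) ^ N) * |Z ω| ^ N
              + (((N : ℝ) - k)/N) * (q : ℝ) ^ k := this
          _ = c * |Z ω| ^ N + d := by rw [hc, hd]
    have hsplit : μ[(fun ω' => c * |Z ω'| ^ N + d) | m]
        =ᵐ[μ] fun ω => c * (μ[(fun ω' => |Z ω'| ^ N) | m]) ω + d := by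
      have h1 : (fun ω' => c * |Z ω'| ^ N + d)
          = (c • fun ω' => |Z ω'| ^ N) + fun _ => d := rfl
      rw [h1]
      refine (condExp_add (hZint.smul c) (integrable_const d) m).trans ?_
      have h2 := condExp_smul (μ := μ) (m := m) c (fun ω' => |Z ω'| ^ N)
      have h3 := condExp_const hm d (μ := μ)
      filter_upwards [h2] with ω h2ω
      simp only [Pi.add_apply, Pi.smul_apply, smul_eq_mul] at h2ω ⊢
      rw [h2ω, h3]
    filter_upwards [hmono, hsplit] with ω h1 h2
    calc (μ[(fun ω' => |Z ω'| ^ k) | m]) ω ≤ (μ[(fun ω' => c * |Z ω'| ^ N + d) | m]) ω := h1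
      _ = c * (μ[(fun ω' => |Z ω'| ^ N) | m]) ω + d := h2
      _ = _ := by rw [hc, hd]
  -- nonnegativity
  have h3 : ∀ᵐ ω ∂μ, 0 ≤ (μ[(fun ω' => |Z ω'| ^ N) | m]) ω :=
    condExp_nonneg (ae_of_all _ fun ω => pow_nonneg (abs_nonneg _) _)
  have h4 : ∀ i : Fin N, ∀ᵐ ω ∂μ, 0 ≤ (μ[(fun ω' => |Z ω'| ^ ((i : ℕ) + 1)) | m]) ω :=
    fun i => condExp_nonneg (ae_of_all _ fun ω => pow_nonneg (abs_nonneg _) _)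
  have H1 : ∀ᵐ ω ∂μ, ∀ i : Fin N,
      |(μ[(fun ω' => (Z ω') ^ ((i : ℕ) + 1)) | m]) ω|
        ≤ (μ[(fun ω' => |Z ω'| ^ ((i : ℕ) + 1)) | m]) ω := ae_all_iff.2 fact1
  have H2 : ∀ᵐ ω ∂μ, ∀ i : Fin N, ∀ q : ℚ, 0 < q →
      (μ[(fun ω' => |Z ω'| ^ ((i : ℕ) + 1)) | m]) ω
        ≤ (((((i : ℕ) + 1 : ℕ)) : ℝ)/N) * ((q : ℝ) ^ ((i : ℕ) + 1) / (q : ℝ) ^ N)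
            * (μ[(fun ω' => |Z ω'| ^ N) | m]) ω
          + (((N : ℝ) - (((i : ℕ) + 1 : ℕ) : ℝ))/N) * (q : ℝ) ^ ((i : ℕ) + 1) := by
    rw [ae_all_iff]
    intro i
    rw [ae_all_iff]
    intro q
    by_cases hq : 0 < q
    · filter_upwards [fact2 i q hq] with ω hω _ using hω
    · exact ae_of_all _ fun ω hq' => absurd hq' hq
  have H4 : ∀ᵐ ω ∂μ, ∀ i : Fin N,
      0 ≤ (μ[(fun ω' => |Z ω'| ^ ((i : ℕ) + 1)) | m]) ω := ae_all_iff.2 h4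
  filter_upwards [H1, H2, h3, H4] with ω h1ω h2ω h3ω h4ω
  refine normN_le_s16 N hN _ _ h3ω fun i => ?_
  have hkey := key_pt ((i : ℕ) + 1) N (Nat.le_add_left 1 _) i.isLt hN h3ω
    (b := (μ[(fun ω' => |Z ω'| ^ ((i : ℕ) + 1)) | m]) ω) (fun q hq => by
      have := h2ω i q hq
      push_cast at this ⊢
      convert this using 2)
  calc |(μ[(fun ω' => (Z ω') ^ ((i : ℕ) + 1)) | m]) ω|
      ≤ (μ[(fun ω' => |Z ω'| ^ ((i : ℕ) + 1)) | m]) ω := h1ω i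
    _ ≤ ((μ[(fun ω' => |Z ω'| ^ N) | m]) ω) ^ (((((i : ℕ) + 1 : ℕ)) : ℝ)/(N : ℝ)) := hkey
    _ = ((μ[(fun ω' => |Z ω'| ^ N) | m]) ω) ^ ((((i : ℕ) : ℝ) + 1)/(N : ℝ)) := by push_cast; ring_nf
end
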